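/- arXiv:1902.06339 — 3 statements merged into one kernel-verified Lean document; each statement's English description precedes it below -/
import Mathlib

section
/- Suppose the linear equation x' = A(t)x on ℝ^d admits a nonuniform strong exponential dichotomy with projections P(t) and constants M, λ, λ̄ > 0 (λ ≤ λ̄) and ε ≥ 0. Then there exist a family of norms ‖·‖_t on ℝ^d (t ∈ ℝ), a constant C > 0 and a constant ε' ≥ 0 such that ‖x‖ ≤ ‖x‖_t ≤ Ce^{ε'|t|}‖x‖ for all x ∈ ℝ^d and t ∈ ℝ, and the equation admits a strong exponential dichotomy with respect to the norms ‖·‖_t, with the same projections P(t) and the same exponents λ, λ̄ (for some constant D > 0). -/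
/- STATEMENT 0: A nonuniform strong exponential dichotomy yields a strong exponential
dichotomy with respect to a family of norms `‖·‖_t` satisfying
`‖x‖ ≤ ‖x‖_t ≤ C e^{ε'|t|} ‖x‖`, with the same projections and exponents. -/

noncomputable section

/-- `ℝ^d` -/
abbrev Ed (d : ℕ) := Fin d → ℝ

/-- Weight function for the Lyapunov norms. -/
noncomputable def Wt (lam lamBar : ℝ) (b c : Bool) (t τ : ℝ) : ℝ :=
  match b, c with
  | true,  true  => if t ≤ τ then Real.exp (lam * |τ - t|) else 0
  | false, true  => if τ ≤ t then Real.exp (lam * |τ - t|) else 0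
  | _,     false => Real.exp (-lamBar * |τ - t|)

lemma Wt_nonneg (lam lamBar : ℝ) (b c : Bool) (t τ : ℝ) : 0 ≤ Wt lam lamBar b c t τ := by
  rcases b <;> rcases c <;> simp only [Wt] <;> first
    | positivity
    | (split_ifs <;> positivity)

/-- The family of functions whose supremum defines the Lyapunov norm. -/
noncomputable def Ffam {d : ℕ} (T : ℝ → ℝ → Ed d →L[ℝ] Ed d)
    (P : ℝ → Ed d →L[ℝ] Ed d) (lam lamBar t : ℝ) (x : Ed d)
    (p : Bool × Bool × ℝ) : ℝ :=
  Wt lam lamBar p.1 p.2.1 t p.2.2 *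
    (2 * ‖T p.2.2 t (match p.1 with | true => P t x | false => x - P t x)‖)

lemma Ffam_nonneg {d : ℕ} (T : ℝ → ℝ → Ed d →L[ℝ] Ed d)
    (P : ℝ → Ed d →L[ℝ] Ed d) (lam lamBar t : ℝ) (x : Ed d)
    (p : Bool × Bool × ℝ) : 0 ≤ Ffam T P lam lamBar t x p :=
  mul_nonneg (Wt_nonneg _ _ _ _ _ _) (by positivity)

set_option maxHeartbeats 2000000 in
theorem nonuniform_SED_implies_SED_wrt_norms (d : ℕ)
    -- the linear equation x' = A(t) x and its evolution family T(t,s)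
    (A : ℝ → Ed d →L[ℝ] Ed d) (T : ℝ → ℝ → Ed d →L[ℝ] Ed d)
    (hT_id : ∀ t, T t t = ContinuousLinearMap.id ℝ (Ed d))
    (hT_comp : ∀ t s r, (T t s).comp (T s r) = T t r)
    (hT_deriv : ∀ s x t, HasDerivAt (fun τ => T τ s x) (A t (T t s x)) t)
    -- nonuniform strong exponential dichotomy with projections P(t)
    (P : ℝ → Ed d →L[ℝ] Ed d) (M lam lamBar eps : ℝ)
    (hM : 0 < M) (hlam : 0 < lam) (hlamBar : 0 < lamBar) (hll : lam ≤ lamBar)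
    (heps : 0 ≤ eps)
    (hP_proj : ∀ t, (P t).comp (P t) = P t)
    (hP_comm : ∀ t s, (T t s).comp (P s) = (P t).comp (T t s))
    (hstable : ∀ t s, s ≤ t →
      ‖(T t s).comp (P s)‖ ≤ M * Real.exp (-lam * (t - s) + eps * |s|))
    (hunstable : ∀ t s, t ≤ s →
      ‖(T t s).comp (ContinuousLinearMap.id ℝ (Ed d) - P s)‖ ≤
        M * Real.exp (-lam * (s - t) + eps * |s|))
    (hgrowth : ∀ t s, ‖T t s‖ ≤ M * Real.exp (lamBar * |t - s| + eps * |s|)) :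
    -- there is a family of norms ‖·‖_t = N t, constants C > 0, ε' ≥ 0 ...
    ∃ (N : ℝ → Seminorm ℝ (Ed d)) (C eps' : ℝ), 0 < C ∧ 0 ≤ eps' ∧
      (∀ (t : ℝ) (x : Ed d), ‖x‖ ≤ N t x ∧ N t x ≤ C * Real.exp (eps' * |t|) * ‖x‖) ∧
      -- ... and a strong exponential dichotomy with respect to these norms,
      -- with the same projections P(t) and the same exponents λ, λ̄, for some D > 0
      ∃ D : ℝ, 0 < D ∧
        (∀ (t s : ℝ) (x : Ed d), s ≤ t →
          N t (T t s (P s x)) ≤ D * Real.exp (-lam * (t - s)) * N s x) ∧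
        (∀ (t s : ℝ) (x : Ed d), t ≤ s →
          N t (T t s (x - P s x)) ≤ D * Real.exp (-lam * (s - t)) * N s x) ∧
        (∀ (t s : ℝ) (x : Ed d),
          N t (T t s x) ≤ D * Real.exp (lamBar * |t - s|) * N s x) := by
  -- pointwise versions of the flow identities
  have Tflow : ∀ t s r (x : Ed d), T t s (T s r x) = T t r x := by
    intro t s r x
    have h := ContinuousLinearMap.ext_iff.mp (hT_comp t s r) x
    simpa using h
  have Ttt : ∀ t (x : Ed d), T t t x = x := by
    intro t x; rw [hT_id]; rfl
  have Pidem : ∀ t (x : Ed d), P t (P t x) = P t x := by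
    intro t x
    have h := ContinuousLinearMap.ext_iff.mp (hP_proj t) x
    simpa using h
  have Pcomm : ∀ t s (x : Ed d), T t s (P s x) = P t (T t s x) := by
    intro t s x
    have h := ContinuousLinearMap.ext_iff.mp (hP_comm t s) x
    simpa using h
  -- pointwise versions of the dichotomy estimates
  have hstabx : ∀ t s (x : Ed d), s ≤ t →
      ‖T t s (P s x)‖ ≤ M * Real.exp (-lam * (t - s) + eps * |s|) * ‖x‖ := by
    intro t s x h
    have h1 := ContinuousLinearMap.le_opNorm ((T t s).comp (P s)) x
    simp only [ContinuousLinearMap.comp_apply] at h1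
    exact h1.trans (mul_le_mul_of_nonneg_right (hstable t s h) (norm_nonneg x))
  have hunstx : ∀ t s (x : Ed d), t ≤ s →
      ‖T t s (x - P s x)‖ ≤ M * Real.exp (-lam * (s - t) + eps * |s|) * ‖x‖ := by
    intro t s x h
    have h1 := ContinuousLinearMap.le_opNorm
      ((T t s).comp (ContinuousLinearMap.id ℝ (Ed d) - P s)) x
    simp only [ContinuousLinearMap.comp_apply, ContinuousLinearMap.sub_apply,
      ContinuousLinearMap.id_apply] at h1
    exact h1.trans (mul_le_mul_of_nonneg_right (hunstable t s h) (norm_nonneg x))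
  have hgrx : ∀ t s (x : Ed d), ‖T t s x‖ ≤ M * Real.exp (lamBar * |t - s| + eps * |s|) * ‖x‖ := by
    intro t s x
    exact (ContinuousLinearMap.le_opNorm (T t s) x).trans
      (mul_le_mul_of_nonneg_right (hgrowth t s) (norm_nonneg x))
  have hPx : ∀ t (x : Ed d), ‖P t x‖ ≤ M * Real.exp (eps * |t|) * ‖x‖ := by
    intro t x
    have h := hstabx t t x le_rfl
    rw [Ttt, show -lam * (t - t) + eps * |t| = eps * |t| by ring] at h
    exact h
  have hQx : ∀ t (x : Ed d), ‖x - P t x‖ ≤ M * Real.exp (eps * |t|) * ‖x‖ := by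
    intro t x
    have h := hunstx t t x le_rfl
    rw [Ttt, show -lam * (t - t) + eps * |t| = eps * |t| by ring] at h
    exact h
  -- a helper for exponential bounds
  have expbnd : ∀ (w0 E e0 K C' zn : ℝ), 0 ≤ K → zn ≤ K * Real.exp E → w0 + E ≤ e0 → K ≤ C' →
      Real.exp w0 * (2 * zn) ≤ 2 * C' * Real.exp e0 := by
    intro w0 E e0 K C' zn hK h hE hKC
    have h1 : Real.exp w0 * (2 * zn) ≤ Real.exp w0 * (2 * (K * Real.exp E)) := by
      have := Real.exp_pos w0
      nlinarith
    have h2 : Real.exp w0 * (2 * (K * Real.exp E)) = 2 * K * Real.exp (w0 + E) := by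
      rw [Real.exp_add]; ring
    have h3 : 2 * K * Real.exp (w0 + E) ≤ 2 * K * Real.exp e0 := by
      have := Real.exp_le_exp.2 hE
      nlinarith [Real.exp_pos (w0 + E), Real.exp_pos e0]
    have h4 : 2 * K * Real.exp e0 ≤ 2 * C' * Real.exp e0 := by
      nlinarith [Real.exp_pos e0]
    linarith [h2 ▸ h1]
  have hsplit : ∀ a b : ℝ, Real.exp (a + 2 * b) = Real.exp (a + b) * Real.exp b := by
    intro a b
    rw [← Real.exp_add]
    ring_nf
  have expstep : ∀ (w0 w1 e0 zn Ns : ℝ), 0 ≤ zn → Real.exp w1 * zn ≤ Ns → w0 - w1 ≤ e0 →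
      Real.exp w0 * zn ≤ 2 * Real.exp e0 * Ns := by
    intro w0 w1 e0 zn Ns hz h hw
    have h1 : Real.exp w0 * zn = Real.exp (w0 - w1) * (Real.exp w1 * zn) := by
      rw [← mul_assoc, ← Real.exp_add]
      ring_nf
    have hNs : 0 ≤ Ns := le_trans (mul_nonneg (Real.exp_pos w1).le hz) h
    rw [h1]
    calc Real.exp (w0 - w1) * (Real.exp w1 * zn) ≤ Real.exp e0 * Ns :=
          mul_le_mul (Real.exp_le_exp.2 hw) h (by positivity) (Real.exp_pos _).le
      _ ≤ 2 * Real.exp e0 * Ns := by nlinarith [Real.exp_pos e0]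
  -- uniform bound on the family
  have hFb : ∀ t (x : Ed d) (p : Bool × Bool × ℝ),
      Ffam T P lam lamBar t x p ≤ 2 * M * (1 + M) * Real.exp (2 * eps * |t|) * ‖x‖ := by
    intro t x ⟨b, c, τ⟩
    have hepst : 0 ≤ eps * |t| := mul_nonneg heps (abs_nonneg t)
    rcases b <;> rcases c
    · -- b = false, c = false : global weight, unstable part
      show Real.exp (-lamBar * |τ - t|) * (2 * ‖T τ t (x - P t x)‖) ≤ _
      have hz : ‖T τ t (x - P t x)‖ ≤ (M * M * ‖x‖) * Real.exp (lamBar * |τ - t| + 2 * (eps * |t|)) := by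
        calc ‖T τ t (x - P t x)‖ ≤ M * Real.exp (lamBar * |τ - t| + eps * |t|) * ‖x - P t x‖ :=
              hgrx τ t _
          _ ≤ M * Real.exp (lamBar * |τ - t| + eps * |t|) * (M * Real.exp (eps * |t|) * ‖x‖) :=
              mul_le_mul_of_nonneg_left (hQx t x) (by positivity)
          _ = (M * M * ‖x‖) * Real.exp (lamBar * |τ - t| + 2 * (eps * |t|)) := by
              rw [hsplit (lamBar * |τ - t|) (eps * |t|)]
              ring
      calc Real.exp (-lamBar * |τ - t|) * (2 * ‖T τ t (x - P t x)‖)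
          ≤ 2 * (M * (1 + M) * ‖x‖) * Real.exp (2 * eps * |t|) := by
            apply expbnd _ (lamBar * |τ - t| + 2 * (eps * |t|)) _ (M * M * ‖x‖) _ _
              (by positivity) hz (by linarith) (by nlinarith [norm_nonneg x, mul_nonneg (mul_nonneg hM.le hM.le) (norm_nonneg x), mul_nonneg hM.le (norm_nonneg x)])
        _ = 2 * M * (1 + M) * Real.exp (2 * eps * |t|) * ‖x‖ := by ring
    · -- b = false, c = true : one-sided weight, unstable part
      show (if τ ≤ t then Real.exp (lam * |τ - t|) else 0) * (2 * ‖T τ t (x - P t x)‖) ≤ _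
      split_ifs with h
      · have habs : |τ - t| = t - τ := by rw [abs_sub_comm]; exact abs_of_nonneg (by linarith)
        have hz : ‖T τ t (x - P t x)‖ ≤ (M * ‖x‖) * Real.exp (-lam * (t - τ) + eps * |t|) := by
          calc ‖T τ t (x - P t x)‖ ≤ M * Real.exp (-lam * (t - τ) + eps * |t|) * ‖x‖ :=
                hunstx τ t x h
            _ = (M * ‖x‖) * Real.exp (-lam * (t - τ) + eps * |t|) := by ring
        calc (Real.exp (lam * |τ - t|)) * (2 * ‖T τ t (x - P t x)‖)
            ≤ 2 * (M * (1 + M) * ‖x‖) * Real.exp (2 * eps * |t|) := by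
              apply expbnd _ (-lam * (t - τ) + eps * |t|) _ (M * ‖x‖) _ _
                (by positivity) hz (by rw [habs]; nlinarith) (by nlinarith [norm_nonneg x, mul_nonneg (mul_nonneg hM.le hM.le) (norm_nonneg x), mul_nonneg hM.le (norm_nonneg x)])
          _ = 2 * M * (1 + M) * Real.exp (2 * eps * |t|) * ‖x‖ := by ring
      · rw [zero_mul]; positivity
    · -- b = true, c = false : global weight, stable part
      show Real.exp (-lamBar * |τ - t|) * (2 * ‖T τ t (P t x)‖) ≤ _
      have hz : ‖T τ t (P t x)‖ ≤ (M * M * ‖x‖) * Real.exp (lamBar * |τ - t| + 2 * (eps * |t|)) := by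
        calc ‖T τ t (P t x)‖ ≤ M * Real.exp (lamBar * |τ - t| + eps * |t|) * ‖P t x‖ :=
              hgrx τ t _
          _ ≤ M * Real.exp (lamBar * |τ - t| + eps * |t|) * (M * Real.exp (eps * |t|) * ‖x‖) :=
              mul_le_mul_of_nonneg_left (hPx t x) (by positivity)
          _ = (M * M * ‖x‖) * Real.exp (lamBar * |τ - t| + 2 * (eps * |t|)) := by
              rw [hsplit (lamBar * |τ - t|) (eps * |t|)]
              ring
      calc Real.exp (-lamBar * |τ - t|) * (2 * ‖T τ t (P t x)‖)
          ≤ 2 * (M * (1 + M) * ‖x‖) * Real.exp (2 * eps * |t|) := by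
            apply expbnd _ (lamBar * |τ - t| + 2 * (eps * |t|)) _ (M * M * ‖x‖) _ _
              (by positivity) hz (by linarith) (by nlinarith [norm_nonneg x, mul_nonneg (mul_nonneg hM.le hM.le) (norm_nonneg x), mul_nonneg hM.le (norm_nonneg x)])
        _ = 2 * M * (1 + M) * Real.exp (2 * eps * |t|) * ‖x‖ := by ring
    · -- b = true, c = true : one-sided weight, stable part
      show (if t ≤ τ then Real.exp (lam * |τ - t|) else 0) * (2 * ‖T τ t (P t x)‖) ≤ _
      split_ifs with h
      · have habs : |τ - t| = τ - t := abs_of_nonneg (by linarith)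
        have hz : ‖T τ t (P t x)‖ ≤ (M * ‖x‖) * Real.exp (-lam * (τ - t) + eps * |t|) := by
          calc ‖T τ t (P t x)‖ ≤ M * Real.exp (-lam * (τ - t) + eps * |t|) * ‖x‖ :=
                hstabx τ t x h
            _ = (M * ‖x‖) * Real.exp (-lam * (τ - t) + eps * |t|) := by ring
        calc (Real.exp (lam * |τ - t|)) * (2 * ‖T τ t (P t x)‖)
            ≤ 2 * (M * (1 + M) * ‖x‖) * Real.exp (2 * eps * |t|) := by
              apply expbnd _ (-lam * (τ - t) + eps * |t|) _ (M * ‖x‖) _ _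
                (by positivity) hz (by rw [habs]; nlinarith) (by nlinarith [norm_nonneg x, mul_nonneg (mul_nonneg hM.le hM.le) (norm_nonneg x), mul_nonneg hM.le (norm_nonneg x)])
          _ = 2 * M * (1 + M) * Real.exp (2 * eps * |t|) * ‖x‖ := by ring
      · rw [zero_mul]; positivity
  -- boundedness of the family and basic sup facts
  have hbdd : ∀ t (x : Ed d), BddAbove (Set.range (Ffam T P lam lamBar t x)) := by
    intro t x
    exact ⟨2 * M * (1 + M) * Real.exp (2 * eps * |t|) * ‖x‖, by
      rintro y ⟨p, rfl⟩; exact hFb t x p⟩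
  have hle : ∀ t (x : Ed d) (p : Bool × Bool × ℝ),
      Ffam T P lam lamBar t x p ≤ ⨆ q, Ffam T P lam lamBar t x q := by
    intro t x p
    exact le_ciSup (hbdd t x) p
  have hsup0 : ∀ t (x : Ed d), 0 ≤ ⨆ q, Ffam T P lam lamBar t x q := by
    intro t x
    exact le_trans (Ffam_nonneg T P lam lamBar t x (true, false, t)) (hle t x _)
  -- seminorm axioms
  have htri : ∀ t (x y : Ed d),
      (⨆ p, Ffam T P lam lamBar t (x + y) p) ≤
        (⨆ p, Ffam T P lam lamBar t x p) + ⨆ p, Ffam T P lam lamBar t y p := by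
    intro t x y
    apply ciSup_le
    rintro ⟨b, c, τ⟩
    have key : Ffam T P lam lamBar t (x + y) (b, c, τ) ≤
        Ffam T P lam lamBar t x (b, c, τ) + Ffam T P lam lamBar t y (b, c, τ) := by
      have hw := Wt_nonneg lam lamBar b c t τ
      rcases b
      · show Wt lam lamBar false c t τ * (2 * ‖T τ t (x + y - P t (x + y))‖) ≤
          Wt lam lamBar false c t τ * (2 * ‖T τ t (x - P t x)‖) +
          Wt lam lamBar false c t τ * (2 * ‖T τ t (y - P t y)‖)
        have hv : x + y - P t (x + y) = (x - P t x) + (y - P t y) := by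
          rw [map_add]; abel
        rw [hv, map_add]
        have hn := norm_add_le (T τ t (x - P t x)) (T τ t (y - P t y))
        nlinarith
      · show Wt lam lamBar true c t τ * (2 * ‖T τ t (P t (x + y))‖) ≤
          Wt lam lamBar true c t τ * (2 * ‖T τ t (P t x)‖) +
          Wt lam lamBar true c t τ * (2 * ‖T τ t (P t y)‖)
        rw [map_add, map_add]
        have hn := norm_add_le (T τ t (P t x)) (T τ t (P t y))
        nlinarith
    exact key.trans (add_le_add (hle t x _) (hle t y _))
  have hsmul : ∀ t (a : ℝ) (x : Ed d),
      (⨆ p, Ffam T P lam lamBar t (a • x) p) = ‖a‖ * ⨆ p, Ffam T P lam lamBar t x p := by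
    intro t a x
    rw [Real.mul_iSup_of_nonneg (norm_nonneg a)]
    congr 1
    funext p
    rcases p with ⟨b, c, τ⟩
    rcases b
    · show Wt lam lamBar false c t τ * (2 * ‖T τ t (a • x - P t (a • x))‖) =
        ‖a‖ * (Wt lam lamBar false c t τ * (2 * ‖T τ t (x - P t x)‖))
      rw [map_smul, show a • x - a • P t x = a • (x - P t x) from (smul_sub a x (P t x)).symm,
        map_smul, norm_smul]
      ring
    · show Wt lam lamBar true c t τ * (2 * ‖T τ t (P t (a • x))‖) =
        ‖a‖ * (Wt lam lamBar true c t τ * (2 * ‖T τ t (P t x)‖))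
      rw [map_smul, map_smul, norm_smul]
      ring
  -- the Lyapunov norms
  refine ⟨fun t => Seminorm.of (fun x => ⨆ p, Ffam T P lam lamBar t x p) (htri t) (hsmul t),
    2 * M * (1 + M), 2 * eps, by nlinarith, by linarith, ?_, 2, by norm_num, ?_, ?_, ?_⟩
  · -- norm equivalence
    intro t x
    constructor
    · -- lower bound
      have h1 : 2 * ‖P t x‖ ≤ ⨆ p, Ffam T P lam lamBar t x p := by
        have h := hle t x (true, false, t)
        have he : Ffam T P lam lamBar t x (true, false, t) = 2 * ‖P t x‖ := by
          show Real.exp (-lamBar * |t - t|) * (2 * ‖T t t (P t x)‖) = 2 * ‖P t x‖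
          rw [Ttt, sub_self, abs_zero, mul_zero, Real.exp_zero, one_mul]
        rw [he] at h
        exact h
      have h2 : 2 * ‖x - P t x‖ ≤ ⨆ p, Ffam T P lam lamBar t x p := by
        have h := hle t x (false, false, t)
        have he : Ffam T P lam lamBar t x (false, false, t) = 2 * ‖x - P t x‖ := by
          show Real.exp (-lamBar * |t - t|) * (2 * ‖T t t (x - P t x)‖) = 2 * ‖x - P t x‖
          rw [Ttt, sub_self, abs_zero, mul_zero, Real.exp_zero, one_mul]
        rw [he] at h
        exact h
      have h3 : ‖x‖ ≤ ‖P t x‖ + ‖x - P t x‖ := by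
        calc ‖x‖ = ‖P t x + (x - P t x)‖ := by congr 1; abel
          _ ≤ ‖P t x‖ + ‖x - P t x‖ := norm_add_le _ _
      show ‖x‖ ≤ ⨆ p, Ffam T P lam lamBar t x p
      linarith
    · -- upper bound
      show (⨆ p, Ffam T P lam lamBar t x p) ≤ 2 * M * (1 + M) * Real.exp (2 * eps * |t|) * ‖x‖
      exact ciSup_le (hFb t x)
  · -- stable estimate
    intro t s x hst
    have hNs0 := hsup0 s x
    have hPfix : P t (T t s (P s x)) = T t s (P s x) := by
      rw [← Pcomm, Pidem]
    show (⨆ p, Ffam T P lam lamBar t (T t s (P s x)) p) ≤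
      2 * Real.exp (-lam * (t - s)) * ⨆ q, Ffam T P lam lamBar s x q
    apply ciSup_le
    rintro ⟨b, c, τ⟩
    rcases b
    · -- unstable component of the argument vanishes
      show Wt lam lamBar false c t τ *
          (2 * ‖T τ t (T t s (P s x) - P t (T t s (P s x)))‖) ≤ _
      rw [hPfix, sub_self, map_zero, norm_zero, mul_zero, mul_zero]
      exact mul_nonneg (mul_nonneg (by norm_num) (Real.exp_pos _).le) hNs0
    · rcases c
      · -- global weight
        show Real.exp (-lamBar * |τ - t|) * (2 * ‖T τ t (P t (T t s (P s x)))‖) ≤ _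
        rw [hPfix, Tflow]
        by_cases hsτ : s ≤ τ
        · have hG : Real.exp (lam * |τ - s|) * (2 * ‖T τ s (P s x)‖) ≤
              ⨆ q, Ffam T P lam lamBar s x q := by
            have h := hle s x (true, true, τ)
            rw [show Ffam T P lam lamBar s x (true, true, τ)
                = (if s ≤ τ then Real.exp (lam * |τ - s|) else 0) * (2 * ‖T τ s (P s x)‖)
                from rfl, if_pos hsτ] at h
            exact h
          refine expstep _ (lam * |τ - s|) _ _ _ (by positivity) hG ?_
          have h1 : t - τ ≤ |τ - t| := by rw [abs_sub_comm]; exact le_abs_self _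
          have h2 : lam * (t - τ) ≤ lam * |τ - t| := mul_le_mul_of_nonneg_left h1 hlam.le
          have h3 : lam * |τ - t| ≤ lamBar * |τ - t| :=
            mul_le_mul_of_nonneg_right hll (abs_nonneg _)
          rw [abs_of_nonneg (by linarith : (0:ℝ) ≤ τ - s)]
          nlinarith
        · push_neg at hsτ
          have hG : Real.exp (-lamBar * |τ - s|) * (2 * ‖T τ s (P s x)‖) ≤
              ⨆ q, Ffam T P lam lamBar s x q := hle s x (true, false, τ)
          refine expstep _ (-lamBar * |τ - s|) _ _ _ (by positivity) hG ?_
          rw [abs_of_nonpos (by linarith : τ - t ≤ 0), abs_of_nonpos (by linarith : τ - s ≤ 0)]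
          nlinarith [mul_nonneg (sub_nonneg.2 hll) (sub_nonneg.2 hst)]
      · -- one-sided weight
        show (if t ≤ τ then Real.exp (lam * |τ - t|) else 0) *
            (2 * ‖T τ t (P t (T t s (P s x)))‖) ≤ _
        split_ifs with h
        · rw [hPfix, Tflow]
          have hG : Real.exp (lam * |τ - s|) * (2 * ‖T τ s (P s x)‖) ≤
              ⨆ q, Ffam T P lam lamBar s x q := by
            have hh := hle s x (true, true, τ)
            rw [show Ffam T P lam lamBar s x (true, true, τ)
                = (if s ≤ τ then Real.exp (lam * |τ - s|) else 0) * (2 * ‖T τ s (P s x)‖)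
                from rfl, if_pos (hst.trans h)] at hh
            exact hh
          refine expstep _ (lam * |τ - s|) _ _ _ (by positivity) hG ?_
          rw [abs_of_nonneg (by linarith : (0:ℝ) ≤ τ - t),
            abs_of_nonneg (by linarith : (0:ℝ) ≤ τ - s)]
          nlinarith
        · rw [zero_mul]
          exact mul_nonneg (mul_nonneg (by norm_num) (Real.exp_pos _).le) hNs0
  · -- unstable estimate
    intro t s x hst
    have hNs0 := hsup0 s x
    have hPzero : P t (T t s (x - P s x)) = 0 := by
      rw [← Pcomm, map_sub, Pidem, sub_self, map_zero]
    show (⨆ p, Ffam T P lam lamBar t (T t s (x - P s x)) p) ≤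
      2 * Real.exp (-lam * (s - t)) * ⨆ q, Ffam T P lam lamBar s x q
    apply ciSup_le
    rintro ⟨b, c, τ⟩
    rcases b
    · -- b = false : the whole vector survives
      have hQfix : T t s (x - P s x) - P t (T t s (x - P s x)) = T t s (x - P s x) := by
        rw [hPzero, sub_zero]
      rcases c
      · show Real.exp (-lamBar * |τ - t|) *
            (2 * ‖T τ t (T t s (x - P s x) - P t (T t s (x - P s x)))‖) ≤ _
        rw [hQfix, Tflow]
        by_cases hτs : τ ≤ s
        · have hG : Real.exp (lam * |τ - s|) * (2 * ‖T τ s (x - P s x)‖) ≤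
              ⨆ q, Ffam T P lam lamBar s x q := by
            have h := hle s x (false, true, τ)
            rw [show Ffam T P lam lamBar s x (false, true, τ)
                = (if τ ≤ s then Real.exp (lam * |τ - s|) else 0) * (2 * ‖T τ s (x - P s x)‖)
                from rfl, if_pos hτs] at h
            exact h
          refine expstep _ (lam * |τ - s|) _ _ _ (by positivity) hG ?_
          have h1 : τ - t ≤ |τ - t| := le_abs_self _
          have h2 : lam * (τ - t) ≤ lam * |τ - t| := mul_le_mul_of_nonneg_left h1 hlam.le
          have h3 : lam * |τ - t| ≤ lamBar * |τ - t| :=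
            mul_le_mul_of_nonneg_right hll (abs_nonneg _)
          rw [abs_of_nonpos (by linarith : τ - s ≤ 0)]
          nlinarith
        · push_neg at hτs
          have hG : Real.exp (-lamBar * |τ - s|) * (2 * ‖T τ s (x - P s x)‖) ≤
              ⨆ q, Ffam T P lam lamBar s x q := hle s x (false, false, τ)
          refine expstep _ (-lamBar * |τ - s|) _ _ _ (by positivity) hG ?_
          rw [abs_of_nonneg (by linarith : (0:ℝ) ≤ τ - t),
            abs_of_nonneg (by linarith : (0:ℝ) ≤ τ - s)]
          nlinarith [mul_nonneg (sub_nonneg.2 hll) (sub_nonneg.2 hst)]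
      · show (if τ ≤ t then Real.exp (lam * |τ - t|) else 0) *
            (2 * ‖T τ t (T t s (x - P s x) - P t (T t s (x - P s x)))‖) ≤ _
        split_ifs with h
        · rw [hQfix, Tflow]
          have hG : Real.exp (lam * |τ - s|) * (2 * ‖T τ s (x - P s x)‖) ≤
              ⨆ q, Ffam T P lam lamBar s x q := by
            have hh := hle s x (false, true, τ)
            rw [show Ffam T P lam lamBar s x (false, true, τ)
                = (if τ ≤ s then Real.exp (lam * |τ - s|) else 0) * (2 * ‖T τ s (x - P s x)‖)
                from rfl, if_pos (h.trans hst)] at hh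
            exact hh
          refine expstep _ (lam * |τ - s|) _ _ _ (by positivity) hG ?_
          rw [abs_of_nonpos (by linarith : τ - t ≤ 0),
            abs_of_nonpos (by linarith : τ - s ≤ 0)]
          nlinarith
        · rw [zero_mul]
          exact mul_nonneg (mul_nonneg (by norm_num) (Real.exp_pos _).le) hNs0
    · -- b = true : the stable component of the argument vanishes
      show Wt lam lamBar true c t τ * (2 * ‖T τ t (P t (T t s (x - P s x)))‖) ≤ _
      rw [hPzero, map_zero, norm_zero, mul_zero, mul_zero]
      exact mul_nonneg (mul_nonneg (by norm_num) (Real.exp_pos _).le) hNs0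
  · -- growth estimate
    intro t s x
    have hNs0 := hsup0 s x
    have hPc : P t (T t s x) = T t s (P s x) := (Pcomm t s x).symm
    have hQc : T t s x - P t (T t s x) = T t s (x - P s x) := by
      rw [hPc, ← map_sub]
    show (⨆ p, Ffam T P lam lamBar t (T t s x) p) ≤
      2 * Real.exp (lamBar * |t - s|) * ⨆ q, Ffam T P lam lamBar s x q
    apply ciSup_le
    rintro ⟨b, c, τ⟩
    rcases b
    · rcases c
      · -- (false, false)
        show Real.exp (-lamBar * |τ - t|) *
            (2 * ‖T τ t (T t s x - P t (T t s x))‖) ≤ _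
        rw [hQc, Tflow]
        have hG : Real.exp (-lamBar * |τ - s|) * (2 * ‖T τ s (x - P s x)‖) ≤
            ⨆ q, Ffam T P lam lamBar s x q := hle s x (false, false, τ)
        refine expstep _ (-lamBar * |τ - s|) _ _ _ (by positivity) hG ?_
        have htr := abs_sub_le τ t s
        have h1 : lamBar * |τ - s| ≤ lamBar * (|τ - t| + |t - s|) :=
          mul_le_mul_of_nonneg_left htr hlamBar.le
        nlinarith
      · -- (false, true)
        show (if τ ≤ t then Real.exp (lam * |τ - t|) else 0) *
            (2 * ‖T τ t (T t s x - P t (T t s x))‖) ≤ _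
        split_ifs with h
        · rw [hQc, Tflow]
          by_cases hτs : τ ≤ s
          · have hG : Real.exp (lam * |τ - s|) * (2 * ‖T τ s (x - P s x)‖) ≤
                ⨆ q, Ffam T P lam lamBar s x q := by
              have hh := hle s x (false, true, τ)
              rw [show Ffam T P lam lamBar s x (false, true, τ)
                  = (if τ ≤ s then Real.exp (lam * |τ - s|) else 0) * (2 * ‖T τ s (x - P s x)‖)
                  from rfl, if_pos hτs] at hh
              exact hh
            refine expstep _ (lam * |τ - s|) _ _ _ (by positivity) hG ?_
            have h1 : t - s ≤ |t - s| := le_abs_self _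
            have h2 : lam * (t - s) ≤ lam * |t - s| := mul_le_mul_of_nonneg_left h1 hlam.le
            have h3 : lam * |t - s| ≤ lamBar * |t - s| :=
              mul_le_mul_of_nonneg_right hll (abs_nonneg _)
            rw [abs_of_nonpos (by linarith : τ - t ≤ 0),
              abs_of_nonpos (by linarith : τ - s ≤ 0)]
            nlinarith
          · push_neg at hτs
            have hG : Real.exp (-lamBar * |τ - s|) * (2 * ‖T τ s (x - P s x)‖) ≤
                ⨆ q, Ffam T P lam lamBar s x q := hle s x (false, false, τ)
            refine expstep _ (-lamBar * |τ - s|) _ _ _ (by positivity) hG ?_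
            have h4 : lam * (t - τ) ≤ lamBar * (t - τ) :=
              mul_le_mul_of_nonneg_right hll (by linarith)
            rw [abs_of_nonpos (by linarith : τ - t ≤ 0),
              abs_of_nonneg (by linarith : (0:ℝ) ≤ τ - s),
              abs_of_nonneg (by linarith : (0:ℝ) ≤ t - s)]
            nlinarith
        · rw [zero_mul]
          exact mul_nonneg (mul_nonneg (by norm_num) (Real.exp_pos _).le) hNs0
    · rcases c
      · -- (true, false)
        show Real.exp (-lamBar * |τ - t|) * (2 * ‖T τ t (P t (T t s x))‖) ≤ _
        rw [hPc, Tflow]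
        have hG : Real.exp (-lamBar * |τ - s|) * (2 * ‖T τ s (P s x)‖) ≤
            ⨆ q, Ffam T P lam lamBar s x q := hle s x (true, false, τ)
        refine expstep _ (-lamBar * |τ - s|) _ _ _ (by positivity) hG ?_
        have htr := abs_sub_le τ t s
        have h1 : lamBar * |τ - s| ≤ lamBar * (|τ - t| + |t - s|) :=
          mul_le_mul_of_nonneg_left htr hlamBar.le
        nlinarith
      · -- (true, true)
        show (if t ≤ τ then Real.exp (lam * |τ - t|) else 0) *
            (2 * ‖T τ t (P t (T t s x))‖) ≤ _
        split_ifs with h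
        · rw [hPc, Tflow]
          by_cases hsτ : s ≤ τ
          · have hG : Real.exp (lam * |τ - s|) * (2 * ‖T τ s (P s x)‖) ≤
                ⨆ q, Ffam T P lam lamBar s x q := by
              have hh := hle s x (true, true, τ)
              rw [show Ffam T P lam lamBar s x (true, true, τ)
                  = (if s ≤ τ then Real.exp (lam * |τ - s|) else 0) * (2 * ‖T τ s (P s x)‖)
                  from rfl, if_pos hsτ] at hh
              exact hh
            refine expstep _ (lam * |τ - s|) _ _ _ (by positivity) hG ?_
            have h1 : s - t ≤ |t - s| := by rw [abs_sub_comm]; exact le_abs_self _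
            have h2 : lam * (s - t) ≤ lam * |t - s| := mul_le_mul_of_nonneg_left h1 hlam.le
            have h3 : lam * |t - s| ≤ lamBar * |t - s| :=
              mul_le_mul_of_nonneg_right hll (abs_nonneg _)
            rw [abs_of_nonneg (by linarith : (0:ℝ) ≤ τ - t),
              abs_of_nonneg (by linarith : (0:ℝ) ≤ τ - s)]
            nlinarith
          · push_neg at hsτ
            have hG : Real.exp (-lamBar * |τ - s|) * (2 * ‖T τ s (P s x)‖) ≤
                ⨆ q, Ffam T P lam lamBar s x q := hle s x (true, false, τ)
            refine expstep _ (-lamBar * |τ - s|) _ _ _ (by positivity) hG ?_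
            have h4 : lam * (τ - t) ≤ lamBar * (τ - t) :=
              mul_le_mul_of_nonneg_right hll (by linarith)
            rw [abs_of_nonneg (by linarith : (0:ℝ) ≤ τ - t),
              abs_of_nonpos (by linarith : τ - s ≤ 0),
              abs_of_nonpos (by linarith : t - s ≤ 0)]
            nlinarith
        · rw [zero_mul]
          exact mul_nonneg (mul_nonneg (by norm_num) (Real.exp_pos _).le) hNs0

end
end

section
/- Suppose x' = A(t)x admits a strong exponential dichotomy with respect to a family of norms ‖·‖_t satisfying ‖x‖ ≤ ‖x‖_t ≤ Ce^{ε|t|}‖x‖, and let Y_∞ and the bounded invertible operator 𝔸 be as defined. If μ > 0 is a real number not belonging to the spectrum of 𝔸 (as a bounded operator on the real Banach space Y_∞), then the evolution family T_μ(t,s) := μ^{−(t−s)}T(t,s) admits a strong exponential dichotomy with respect to the norms ‖·‖_t. -/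
/- STATEMENT 2: If μ > 0 is not in the spectrum of the discretized operator 𝔸 on Y_∞,
then the rescaled evolution family T_μ(t,s) = μ^{-(t-s)} T(t,s) admits a strong
exponential dichotomy with respect to the norms ‖·‖_t. -/

noncomputable section

/-- A family of norms on `ℝ^d` indexed by `ℤ`, each bounded below by the ambient norm
(so each seminorm is in fact a norm). -/
structure NormFamily (d : ℕ) where
  N : ℤ → Seminorm ℝ (Ed d)
  lower : ∀ (n : ℤ) (x : Ed d), ‖x‖ ≤ N n x

variable {d : ℕ}

/-- The submodule of two-sided sequences with bounded weighted norms. -/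
def YinfSubmodule (𝒩 : NormFamily d) : Submodule ℝ (ℤ → Ed d) where
  carrier := {x | ∃ C : ℝ, ∀ n : ℤ, 𝒩.N n (x n) ≤ C}
  add_mem' := by
    rintro x y ⟨Cx, hx⟩ ⟨Cy, hy⟩
    exact ⟨Cx + Cy, fun n => le_trans (map_add_le_add _ _ _) (add_le_add (hx n) (hy n))⟩
  zero_mem' := ⟨0, fun n => by simp⟩
  smul_mem' := by
    rintro c x ⟨Cx, hx⟩
    refine ⟨‖c‖ * Cx, fun n => ?_⟩
    rw [Pi.smul_apply, map_smul_eq_mul]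
    exact mul_le_mul_of_nonneg_left (hx n) (norm_nonneg c)

/-- The Banach space `Y_∞` of sequences bounded with respect to the family of norms,
equipped with the norm `‖x‖ = sup_n ‖x_n‖_n`. -/
def Yinf (𝒩 : NormFamily d) : Type := ↥(YinfSubmodule 𝒩)

instance (𝒩 : NormFamily d) : AddCommGroup (Yinf 𝒩) :=
  inferInstanceAs (AddCommGroup (YinfSubmodule 𝒩))

instance (𝒩 : NormFamily d) : Module ℝ (Yinf 𝒩) :=
  inferInstanceAs (Module ℝ (YinfSubmodule 𝒩))

namespace Yinf

variable {𝒩 : NormFamily d}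

/-- The underlying sequence. -/
def seq (x : Yinf 𝒩) : ℤ → Ed d := x.1

lemma bddAbove (x : Yinf 𝒩) : BddAbove (Set.range fun n => 𝒩.N n (x.seq n)) := by
  obtain ⟨C, hC⟩ := x.2
  exact ⟨C, by rintro _ ⟨n, rfl⟩; exact hC n⟩

@[simp] lemma seq_add (x y : Yinf 𝒩) (n : ℤ) : (x + y).seq n = x.seq n + y.seq n := rfl
@[simp] lemma seq_neg (x : Yinf 𝒩) (n : ℤ) : (-x).seq n = -(x.seq n) := rfl
@[simp] lemma seq_smul (c : ℝ) (x : Yinf 𝒩) (n : ℤ) : (c • x).seq n = c • (x.seq n) := rfl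
@[simp] lemma seq_zero (n : ℤ) : (0 : Yinf 𝒩).seq n = 0 := rfl

instance : NormedAddCommGroup (Yinf 𝒩) :=
  AddGroupNorm.toNormedAddCommGroup
    { toFun := fun x => ⨆ n : ℤ, 𝒩.N n (x.seq n)
      map_zero' := by simp
      add_le' := by
        intro x y
        refine ciSup_le fun n => ?_
        calc 𝒩.N n ((x + y).seq n) = 𝒩.N n (x.seq n + y.seq n) := by rw [seq_add]
          _ ≤ 𝒩.N n (x.seq n) + 𝒩.N n (y.seq n) := map_add_le_add _ _ _
          _ ≤ _ := add_le_add (le_ciSup x.bddAbove n) (le_ciSup y.bddAbove n)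
      neg' := by
        intro x
        refine iSup_congr fun n => ?_
        rw [seq_neg, map_neg_eq_map]
      eq_zero_of_map_eq_zero' := by
        intro x hx
        have h0 : ∀ n : ℤ, x.seq n = 0 := by
          intro n
          have h1 : 𝒩.N n (x.seq n) ≤ 0 := hx ▸ le_ciSup x.bddAbove n
          have h2 : ‖x.seq n‖ ≤ 0 := le_trans (𝒩.lower n _) h1
          exact norm_le_zero_iff.mp h2
        apply Subtype.ext
        funext n
        exact h0 n }

lemma norm_def (x : Yinf 𝒩) : ‖x‖ = ⨆ n : ℤ, 𝒩.N n (x.seq n) := rfl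

instance : NormedSpace ℝ (Yinf 𝒩) where
  norm_smul_le c x := by
    rw [norm_def, norm_def]
    rw [Real.mul_iSup_of_nonneg (norm_nonneg c)]
    refine ciSup_le fun n => ?_
    rw [seq_smul, map_smul_eq_mul]
    have hb : BddAbove (Set.range fun m : ℤ => ‖c‖ * 𝒩.N m (x.seq m)) := by
      obtain ⟨C, hC⟩ := x.bddAbove
      refine ⟨‖c‖ * C, ?_⟩
      rintro _ ⟨m, rfl⟩
      exact mul_le_mul_of_nonneg_left (hC ⟨m, rfl⟩) (norm_nonneg c)
    exact le_ciSup hb n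

end Yinf

/-- A (possibly rescaled) evolution family `S` admits a strong exponential dichotomy
with respect to the family of norms `N t`. -/
def SEDfam (d : ℕ) (S : ℝ → ℝ → Ed d → Ed d) (N : ℝ → Seminorm ℝ (Ed d)) : Prop :=
  ∃ (Q : ℝ → Ed d →L[ℝ] Ed d) (K lam lamBar : ℝ),
    0 < K ∧ 0 < lam ∧ lam ≤ lamBar ∧
    (∀ t, (Q t).comp (Q t) = Q t) ∧
    (∀ t s x, S t s (Q s x) = Q t (S t s x)) ∧
    (∀ t s x, s ≤ t → N t (S t s (Q s x)) ≤ K * Real.exp (-lam * (t - s)) * N s x) ∧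
    (∀ t s x, t ≤ s → N t (S t s (x - Q s x)) ≤ K * Real.exp (-lam * (s - t)) * N s x) ∧
    (∀ t s x, N t (S t s x) ≤ K * Real.exp (lamBar * |t - s|) * N s x)

section ProofAux

namespace Yinf

variable {d : ℕ} {𝒩 : NormFamily d}

lemma seq_le_norm (x : Yinf 𝒩) (n : ℤ) : 𝒩.N n (x.seq n) ≤ ‖x‖ :=
  le_ciSup x.bddAbove n

lemma norm_le' {x : Yinf 𝒩} {c : ℝ} (h : ∀ n, 𝒩.N n (x.seq n) ≤ c) : ‖x‖ ≤ c :=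
  ciSup_le h

lemma ext' {x y : Yinf 𝒩} (h : ∀ n, x.seq n = y.seq n) : x = y :=
  Subtype.ext (funext h)

@[simp] lemma seq_sub (x y : Yinf 𝒩) (n : ℤ) : (x - y).seq n = x.seq n - y.seq n := by
  rw [sub_eq_add_neg, seq_add, seq_neg, sub_eq_add_neg]

end Yinf

variable {d : ℕ}

/-- Make an element of `Yinf` from a bounded sequence. -/
def Ymk (𝒩 : NormFamily d) (f : ℤ → Ed d) (h : ∃ C : ℝ, ∀ n : ℤ, 𝒩.N n (f n) ≤ C) :
    Yinf 𝒩 := ⟨f, h⟩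

@[simp] lemma Ymk_seq (𝒩 : NormFamily d) (f : ℤ → Ed d) (h) (n : ℤ) :
    (Ymk 𝒩 f h).seq n = f n := rfl

/-- The data of the discrete rescaled cocycle together with the key admissibility
estimate coming from the invertibility of `μ - 𝔸`. -/
structure DiscData (𝒩 : NormFamily d) where
  U : ℤ → ℤ → Ed d →L[ℝ] Ed d
  μ : ℝ
  r : ℝ
  G1 : ℝ
  hμ : 0 < μ
  hr : 0 ≤ r
  hG1 : 1 ≤ G1
  hUc : ∀ (k m n : ℤ) (x : Ed d), U k m (U m n x) = U k n x
  hUi : ∀ (n : ℤ) (x : Ed d), U n n x = x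
  hstep : ∀ (n : ℤ) (x : Ed d), 𝒩.N (n+1) (U (n+1) n x) ≤ G1 * 𝒩.N n x
  hstepb : ∀ (n : ℤ) (x : Ed d), 𝒩.N n (U n (n+1) x) ≤ G1 * 𝒩.N (n+1) x
  hkey : ∀ x y : Yinf 𝒩,
    (∀ n : ℤ, μ • (x.seq n - U n (n-1) (x.seq (n-1))) = y.seq n) → ‖x‖ ≤ r * ‖y‖
  hdecomp : ∀ (n : ℤ) (v : Ed d), ∃ y : Yinf 𝒩,
    ∀ m : ℤ, μ • (y.seq m - U m (m-1) (y.seq (m-1))) = (if m = n then v else 0)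

namespace DiscData

variable {d : ℕ} {𝒩 : NormFamily d} (Φ : DiscData 𝒩)

/-- stable vectors at time `n` -/
def Stab (n : ℤ) (v : Ed d) : Prop := ∃ C : ℝ, ∀ k : ℤ, n ≤ k → 𝒩.N k (Φ.U k n v) ≤ C

/-- unstable vectors at time `n` -/
def Unstab (n : ℤ) (v : Ed d) : Prop := ∃ C : ℝ, ∀ k : ℤ, k ≤ n → 𝒩.N k (Φ.U k n v) ≤ C

lemma U_inv (m n : ℤ) (x : Ed d) : Φ.U m n (Φ.U n m x) = x := by
  rw [Φ.hUc, Φ.hUi]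

lemma G1_nonneg : 0 ≤ Φ.G1 := le_trans zero_le_one Φ.hG1

lemma multif (n : ℤ) : ∀ (j : ℕ) (x : Ed d),
    𝒩.N (n + j) (Φ.U (n + j) n x) ≤ Φ.G1 ^ j * 𝒩.N n x := by
  intro j
  induction j with
  | zero => intro x; simp [Φ.hUi]
  | succ j ih =>
    intro x
    have h1 : (n + (j+1 : ℕ) : ℤ) = (n + j) + 1 := by push_cast; ring
    rw [h1]
    have h2 : Φ.U ((n + j) + 1) n x = Φ.U ((n+j)+1) (n+j) (Φ.U (n+j) n x) := by
      rw [Φ.hUc]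
    rw [h2]
    calc 𝒩.N ((n+j)+1) (Φ.U ((n+j)+1) (n+j) (Φ.U (n+j) n x))
        ≤ Φ.G1 * 𝒩.N (n+j) (Φ.U (n+j) n x) := Φ.hstep _ _
      _ ≤ Φ.G1 * (Φ.G1 ^ j * 𝒩.N n x) :=
          mul_le_mul_of_nonneg_left (ih x) Φ.G1_nonneg
      _ = Φ.G1 ^ (j+1) * 𝒩.N n x := by ring

lemma multib (n : ℤ) : ∀ (j : ℕ) (x : Ed d),
    𝒩.N (n - j) (Φ.U (n - j) n x) ≤ Φ.G1 ^ j * 𝒩.N n x := by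
  intro j
  induction j with
  | zero => intro x; simp [Φ.hUi]
  | succ j ih =>
    intro x
    have h1 : (n - (j+1 : ℕ) : ℤ) = (n - j) - 1 := by push_cast; ring
    rw [h1]
    have h2 : Φ.U ((n - j) - 1) n x = Φ.U ((n-j)-1) (n-j) (Φ.U (n-j) n x) := by
      rw [Φ.hUc]
    rw [h2]
    have h3 := Φ.hstepb ((n-j)-1) (Φ.U (n-j) n x)
    rw [sub_add_cancel] at h3
    calc 𝒩.N ((n-j)-1) (Φ.U ((n-j)-1) (n-j) (Φ.U (n-j) n x))
        ≤ Φ.G1 * 𝒩.N (n-j) (Φ.U (n-j) n x) := h3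
      _ ≤ Φ.G1 * (Φ.G1 ^ j * 𝒩.N n x) :=
          mul_le_mul_of_nonneg_left (ih x) Φ.G1_nonneg
      _ = Φ.G1 ^ (j+1) * 𝒩.N n x := by ring

lemma boundf {m n : ℤ} (h : n ≤ m) (x : Ed d) :
    𝒩.N m (Φ.U m n x) ≤ Φ.G1 ^ (m - n).toNat * 𝒩.N n x := by
  obtain ⟨j, hj⟩ : ∃ j : ℕ, m = n + j := ⟨(m - n).toNat, by omega⟩
  subst hj
  have h2 : (n + (j:ℤ) - n).toNat = j := by omega
  rw [h2]; exact Φ.multif n j x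

lemma boundb {m n : ℤ} (h : m ≤ n) (x : Ed d) :
    𝒩.N m (Φ.U m n x) ≤ Φ.G1 ^ (n - m).toNat * 𝒩.N n x := by
  obtain ⟨j, hj⟩ : ∃ j : ℕ, m = n - j := ⟨(n - m).toNat, by omega⟩
  subst hj
  have h2 : (n - (n - (j:ℤ))).toNat = j := by omega
  rw [h2]; exact Φ.multib n j x

lemma stab_map {n : ℤ} {v : Ed d} (h : Φ.Stab n v) (m : ℤ) : Φ.Stab m (Φ.U m n v) := by
  obtain ⟨C, hC⟩ := h
  refine ⟨max C (Φ.G1 ^ (n - m).toNat * 𝒩.N n v), fun k hk => ?_⟩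
  rw [Φ.hUc]
  by_cases hkn : n ≤ k
  · exact le_trans (hC k hkn) (le_max_left _ _)
  · push_neg at hkn
    refine le_trans (Φ.boundb hkn.le v) (le_trans ?_ (le_max_right _ _))
    refine mul_le_mul_of_nonneg_right ?_ (apply_nonneg _ _)
    exact pow_le_pow_right₀ Φ.hG1 (by omega)

lemma unstab_map {n : ℤ} {v : Ed d} (h : Φ.Unstab n v) (m : ℤ) :
    Φ.Unstab m (Φ.U m n v) := by
  obtain ⟨C, hC⟩ := h
  refine ⟨max C (Φ.G1 ^ (m - n).toNat * 𝒩.N n v), fun k hk => ?_⟩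
  rw [Φ.hUc]
  by_cases hkn : k ≤ n
  · exact le_trans (hC k hkn) (le_max_left _ _)
  · push_neg at hkn
    refine le_trans (Φ.boundf hkn.le v) (le_trans ?_ (le_max_right _ _))
    refine mul_le_mul_of_nonneg_right ?_ (apply_nonneg _ _)
    exact pow_le_pow_right₀ Φ.hG1 (by omega)

lemma stab_zero (n : ℤ) : Φ.Stab n 0 :=
  ⟨0, fun k _ => by simp⟩

lemma stab_add {n : ℤ} {v w : Ed d} (hv : Φ.Stab n v) (hw : Φ.Stab n w) :
    Φ.Stab n (v + w) := by
  obtain ⟨Cv, hCv⟩ := hv; obtain ⟨Cw, hCw⟩ := hw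
  refine ⟨Cv + Cw, fun k hk => ?_⟩
  rw [map_add]
  exact le_trans (map_add_le_add _ _ _) (add_le_add (hCv k hk) (hCw k hk))

lemma stab_neg {n : ℤ} {v : Ed d} (hv : Φ.Stab n v) : Φ.Stab n (-v) := by
  obtain ⟨Cv, hCv⟩ := hv
  exact ⟨Cv, fun k hk => by rw [map_neg, map_neg_eq_map]; exact hCv k hk⟩

lemma stab_sub {n : ℤ} {v w : Ed d} (hv : Φ.Stab n v) (hw : Φ.Stab n w) :
    Φ.Stab n (v - w) := by
  rw [sub_eq_add_neg]; exact Φ.stab_add hv (Φ.stab_neg hw)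

lemma stab_smul {n : ℤ} {v : Ed d} (c : ℝ) (hv : Φ.Stab n v) : Φ.Stab n (c • v) := by
  obtain ⟨Cv, hCv⟩ := hv
  refine ⟨‖c‖ * Cv, fun k hk => ?_⟩
  rw [map_smul, map_smul_eq_mul]
  exact mul_le_mul_of_nonneg_left (hCv k hk) (norm_nonneg c)

lemma unstab_zero (n : ℤ) : Φ.Unstab n 0 :=
  ⟨0, fun k _ => by simp⟩

lemma unstab_add {n : ℤ} {v w : Ed d} (hv : Φ.Unstab n v) (hw : Φ.Unstab n w) :
    Φ.Unstab n (v + w) := by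
  obtain ⟨Cv, hCv⟩ := hv; obtain ⟨Cw, hCw⟩ := hw
  refine ⟨Cv + Cw, fun k hk => ?_⟩
  rw [map_add]
  exact le_trans (map_add_le_add _ _ _) (add_le_add (hCv k hk) (hCw k hk))

lemma unstab_neg {n : ℤ} {v : Ed d} (hv : Φ.Unstab n v) : Φ.Unstab n (-v) := by
  obtain ⟨Cv, hCv⟩ := hv
  exact ⟨Cv, fun k hk => by rw [map_neg, map_neg_eq_map]; exact hCv k hk⟩

lemma unstab_sub {n : ℤ} {v w : Ed d} (hv : Φ.Unstab n v) (hw : Φ.Unstab n w) :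
    Φ.Unstab n (v - w) := by
  rw [sub_eq_add_neg]; exact Φ.unstab_add hv (Φ.unstab_neg hw)

lemma unstab_smul {n : ℤ} {v : Ed d} (c : ℝ) (hv : Φ.Unstab n v) : Φ.Unstab n (c • v) := by
  obtain ⟨Cv, hCv⟩ := hv
  refine ⟨‖c‖ * Cv, fun k hk => ?_⟩
  rw [map_smul, map_smul_eq_mul]
  exact mul_le_mul_of_nonneg_left (hCv k hk) (norm_nonneg c)

end DiscData


namespace DiscData

variable {d : ℕ} {𝒩 : NormFamily d} (Φ : DiscData 𝒩)

/-- uniform bound constant -/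
def D2 : ℝ := max 1 (Φ.r * Φ.μ * Φ.G1)

/-- weighted bound constant -/
def c2 : ℝ := Φ.r * Φ.μ * Φ.D2

lemma one_le_D2 : 1 ≤ Φ.D2 := le_max_left _ _

lemma D2_nonneg : 0 ≤ Φ.D2 := le_trans zero_le_one Φ.one_le_D2

lemma c2_nonneg : 0 ≤ Φ.c2 :=
  mul_nonneg (mul_nonneg Φ.hr Φ.hμ.le) Φ.D2_nonneg

lemma rmu_nonneg : 0 ≤ Φ.r * Φ.μ := mul_nonneg Φ.hr Φ.hμ.le

lemma rmu_le_D2 : Φ.r * Φ.μ ≤ Φ.D2 :=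
  le_trans (le_mul_of_one_le_right Φ.rmu_nonneg Φ.hG1) (le_max_right _ _)

lemma tail_s {n : ℤ} {v : Ed d} (h : Φ.Stab n v) {m : ℤ} (hm : n ≤ m) :
    𝒩.N m (Φ.U m n v) ≤ Φ.D2 * 𝒩.N n v := by
  obtain ⟨C, hC⟩ := h
  rcases eq_or_lt_of_le hm with rfl | hm'
  · rw [Φ.hUi]
    exact le_mul_of_one_le_left (apply_nonneg _ _) Φ.one_le_D2
  have hm1 : n + 1 ≤ m := hm'
  set f : ℤ → Ed d := fun k => if n+1 ≤ k then Φ.U k n v else 0 with hf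
  have hfmem : ∃ C', ∀ k, 𝒩.N k (f k) ≤ C' := by
    refine ⟨max C 0, fun k => ?_⟩
    by_cases hk : n+1 ≤ k
    · simp only [hf, if_pos hk]; exact le_trans (hC k (by omega)) (le_max_left _ _)
    · simp only [hf, if_neg hk, map_zero]; exact le_max_right _ _
  set g : ℤ → Ed d := fun k => if k = n+1 then Φ.μ • Φ.U (n+1) n v else 0 with hg
  have hb0 : (0:ℝ) ≤ Φ.μ * (Φ.G1 * 𝒩.N n v) :=
    mul_nonneg Φ.hμ.le (mul_nonneg Φ.G1_nonneg (apply_nonneg _ _))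
  have hgle : ∀ k, 𝒩.N k (g k) ≤ Φ.μ * (Φ.G1 * 𝒩.N n v) := by
    intro k
    by_cases hk : k = n+1
    · simp only [hg, if_pos hk]
      rw [hk, map_smul_eq_mul, Real.norm_eq_abs, abs_of_pos Φ.hμ]
      exact mul_le_mul_of_nonneg_left (Φ.hstep n v) Φ.hμ.le
    · simp only [hg, if_neg hk, map_zero]; exact hb0
  have hgmem : ∃ C', ∀ k, 𝒩.N k (g k) ≤ C' := ⟨_, hgle⟩
  have hxy : ∀ k : ℤ, Φ.μ • ((Ymk 𝒩 f hfmem).seq k - Φ.U k (k-1) ((Ymk 𝒩 f hfmem).seq (k-1)))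
      = (Ymk 𝒩 g hgmem).seq k := by
    intro k
    simp only [Ymk_seq, hf, hg]
    by_cases h1 : n+1 ≤ k-1
    · rw [if_pos (by omega : n+1 ≤ k), if_pos h1, if_neg (by omega : ¬ k = n+1), Φ.hUc,
        sub_self, smul_zero]
    · by_cases h2 : k = n+1
      · rw [h2]
        rw [if_pos (le_refl (n+1)), if_neg (by omega : ¬ n+1 ≤ n+1-1), map_zero, sub_zero,
          if_pos rfl]
      · rw [if_neg (by omega : ¬ n+1 ≤ k), if_neg h1, if_neg h2, map_zero, sub_zero,
          smul_zero]
  have hkey := Φ.hkey _ _ hxy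
  have hyn : ‖Ymk 𝒩 g hgmem‖ ≤ Φ.μ * (Φ.G1 * 𝒩.N n v) :=
    Yinf.norm_le' (fun k => by rw [Ymk_seq]; exact hgle k)
  have hxm : 𝒩.N m (Φ.U m n v) ≤ ‖Ymk 𝒩 f hfmem‖ := by
    have h3 := Yinf.seq_le_norm (Ymk 𝒩 f hfmem) m
    simp only [Ymk_seq, hf, if_pos hm1] at h3
    exact h3
  calc 𝒩.N m (Φ.U m n v) ≤ ‖Ymk 𝒩 f hfmem‖ := hxm
    _ ≤ Φ.r * ‖Ymk 𝒩 g hgmem‖ := hkey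
    _ ≤ Φ.r * (Φ.μ * (Φ.G1 * 𝒩.N n v)) := mul_le_mul_of_nonneg_left hyn Φ.hr
    _ = (Φ.r * Φ.μ * Φ.G1) * 𝒩.N n v := by ring
    _ ≤ Φ.D2 * 𝒩.N n v :=
        mul_le_mul_of_nonneg_right (le_max_right _ _) (apply_nonneg _ _)

lemma tail_u {n : ℤ} {v : Ed d} (h : Φ.Unstab n v) {m : ℤ} (hm : m ≤ n) :
    𝒩.N m (Φ.U m n v) ≤ Φ.D2 * 𝒩.N n v := by
  obtain ⟨C, hC⟩ := h
  rcases eq_or_lt_of_le hm with rfl | hm'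
  · rw [Φ.hUi]
    exact le_mul_of_one_le_left (apply_nonneg _ _) Φ.one_le_D2
  have hm1 : m ≤ n - 1 := by omega
  set f : ℤ → Ed d := fun k => if k ≤ n-1 then Φ.U k n v else 0 with hf
  have hfmem : ∃ C', ∀ k, 𝒩.N k (f k) ≤ C' := by
    refine ⟨max C 0, fun k => ?_⟩
    by_cases hk : k ≤ n-1
    · simp only [hf, if_pos hk]; exact le_trans (hC k (by omega)) (le_max_left _ _)
    · simp only [hf, if_neg hk, map_zero]; exact le_max_right _ _
  set g : ℤ → Ed d := fun k => if k = n then -(Φ.μ • v) else 0 with hg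
  have hb0 : (0:ℝ) ≤ Φ.μ * 𝒩.N n v := mul_nonneg Φ.hμ.le (apply_nonneg _ _)
  have hgle : ∀ k, 𝒩.N k (g k) ≤ Φ.μ * 𝒩.N n v := by
    intro k
    by_cases hk : k = n
    · simp only [hg, if_pos hk]
      rw [hk, map_neg_eq_map, map_smul_eq_mul, Real.norm_eq_abs, abs_of_pos Φ.hμ]
    · simp only [hg, if_neg hk, map_zero]; exact hb0
  have hgmem : ∃ C', ∀ k, 𝒩.N k (g k) ≤ C' := ⟨_, hgle⟩
  have hxy : ∀ k : ℤ, Φ.μ • ((Ymk 𝒩 f hfmem).seq k - Φ.U k (k-1) ((Ymk 𝒩 f hfmem).seq (k-1)))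
      = (Ymk 𝒩 g hgmem).seq k := by
    intro k
    simp only [Ymk_seq, hf, hg]
    by_cases h1 : k ≤ n-1
    · rw [if_pos h1, if_pos (by omega : k-1 ≤ n-1), if_neg (by omega : ¬ k = n), Φ.hUc,
        sub_self, smul_zero]
    · by_cases h2 : k = n
      · rw [h2]
        rw [if_neg (by omega : ¬ n ≤ n-1), if_pos (by omega : n-1 ≤ n-1), if_pos rfl,
          Φ.U_inv, zero_sub, smul_neg]
      · rw [if_neg h1, if_neg (by omega : ¬ k-1 ≤ n-1), if_neg h2, map_zero, sub_zero,
          smul_zero]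
  have hkey := Φ.hkey _ _ hxy
  have hyn : ‖Ymk 𝒩 g hgmem‖ ≤ Φ.μ * 𝒩.N n v :=
    Yinf.norm_le' (fun k => by rw [Ymk_seq]; exact hgle k)
  have hxm : 𝒩.N m (Φ.U m n v) ≤ ‖Ymk 𝒩 f hfmem‖ := by
    have h3 := Yinf.seq_le_norm (Ymk 𝒩 f hfmem) m
    simp only [Ymk_seq, hf, if_pos hm1] at h3
    exact h3
  calc 𝒩.N m (Φ.U m n v) ≤ ‖Ymk 𝒩 f hfmem‖ := hxm
    _ ≤ Φ.r * ‖Ymk 𝒩 g hgmem‖ := hkey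
    _ ≤ Φ.r * (Φ.μ * 𝒩.N n v) := mul_le_mul_of_nonneg_left hyn Φ.hr
    _ = (Φ.r * Φ.μ) * 𝒩.N n v := by ring
    _ ≤ Φ.D2 * 𝒩.N n v := mul_le_mul_of_nonneg_right Φ.rmu_le_D2 (apply_nonneg _ _)

end DiscData
namespace DiscData

variable {d : ℕ} {𝒩 : NormFamily d} (Φ : DiscData 𝒩)

lemma weight_s {n : ℤ} {v : Ed d} (h : Φ.Stab n v) {p : ℤ} (hp : n + 1 ≤ p) :
    ((p - n : ℤ) : ℝ) * 𝒩.N p (Φ.U p n v) ≤ Φ.c2 * 𝒩.N n v := by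
  obtain ⟨C, hC⟩ := id h
  set f : ℤ → Ed d := fun k => if n+1 ≤ k then ((min k p - n : ℤ) : ℝ) • Φ.U k n v else 0
    with hf
  have hfmem : ∃ C', ∀ k, 𝒩.N k (f k) ≤ C' := by
    refine ⟨((p - n : ℤ) : ℝ) * max C 0, fun k => ?_⟩
    have hpn0 : (0:ℝ) ≤ ((p - n : ℤ) : ℝ) := by
      have : (0:ℤ) ≤ p - n := by omega
      exact_mod_cast this
    by_cases hk : n+1 ≤ k
    · simp only [hf, if_pos hk]
      rw [map_smul_eq_mul, Real.norm_eq_abs]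
      have h1 : |((min k p - n : ℤ) : ℝ)| ≤ ((p - n : ℤ) : ℝ) := by
        rw [abs_of_nonneg (by exact_mod_cast (by omega : (0:ℤ) ≤ min k p - n))]
        exact_mod_cast (by omega : min k p - n ≤ p - n)
      exact mul_le_mul h1 (le_trans (hC k (by omega)) (le_max_left _ _))
        (apply_nonneg _ _) hpn0
    · simp only [hf, if_neg hk, map_zero]
      exact mul_nonneg hpn0 (le_max_right _ _)
  set g : ℤ → Ed d := fun k => if n+1 ≤ k ∧ k ≤ p then Φ.μ • Φ.U k n v else 0 with hg
  have hb0 : (0:ℝ) ≤ Φ.μ * (Φ.D2 * 𝒩.N n v) :=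
    mul_nonneg Φ.hμ.le (mul_nonneg Φ.D2_nonneg (apply_nonneg _ _))
  have hgle : ∀ k, 𝒩.N k (g k) ≤ Φ.μ * (Φ.D2 * 𝒩.N n v) := by
    intro k
    by_cases hk : n+1 ≤ k ∧ k ≤ p
    · simp only [hg, if_pos hk]
      rw [map_smul_eq_mul, Real.norm_eq_abs, abs_of_pos Φ.hμ]
      exact mul_le_mul_of_nonneg_left (Φ.tail_s h (by omega : n ≤ k)) Φ.hμ.le
    · simp only [hg, if_neg hk, map_zero]; exact hb0
  have hgmem : ∃ C', ∀ k, 𝒩.N k (g k) ≤ C' := ⟨_, hgle⟩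
  have hxy : ∀ k : ℤ, Φ.μ • ((Ymk 𝒩 f hfmem).seq k - Φ.U k (k-1) ((Ymk 𝒩 f hfmem).seq (k-1)))
      = (Ymk 𝒩 g hgmem).seq k := by
    intro k
    simp only [Ymk_seq, hf, hg]
    by_cases h1 : k ≤ n
    · rw [if_neg (by omega : ¬ n+1 ≤ k), if_neg (by omega : ¬ n+1 ≤ k-1), map_zero,
        sub_zero, smul_zero, if_neg (by omega : ¬ (n+1 ≤ k ∧ k ≤ p))]
    · by_cases h2 : k = n+1
      · rw [h2]
        rw [if_pos (le_refl (n+1)), if_neg (by omega : ¬ n+1 ≤ n+1-1), map_zero, sub_zero,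
          if_pos ⟨le_refl _, hp⟩]
        have e1 : min (n+1) p = n+1 := min_eq_left hp
        rw [e1]
        have e2 : ((n+1-n : ℤ) : ℝ) = 1 := by norm_num
        rw [e2, one_smul]
      · by_cases h3 : k ≤ p
        · -- n+2 ≤ k ≤ p
          rw [if_pos (by omega : n+1 ≤ k), if_pos (by omega : n+1 ≤ k-1), map_smul, Φ.hUc,
            if_pos ⟨by omega, h3⟩]
          have e1 : min k p = k := min_eq_left h3
          have e2 : min (k-1) p = k-1 := min_eq_left (by omega)
          rw [e1, e2, ← sub_smul]
          have e3 : ((k - n : ℤ) : ℝ) - ((k - 1 - n : ℤ) : ℝ) = 1 := by push_cast; ring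
          rw [e3, one_smul]
        · -- k ≥ p+1
          rw [if_pos (by omega : n+1 ≤ k), if_pos (by omega : n+1 ≤ k-1), map_smul, Φ.hUc,
            if_neg (by omega : ¬ (n+1 ≤ k ∧ k ≤ p))]
          have e1 : min k p = p := min_eq_right (by omega)
          have e2 : min (k-1) p = p := min_eq_right (by omega)
          rw [e1, e2, sub_self, smul_zero]
  have hkey := Φ.hkey _ _ hxy
  have hyn : ‖Ymk 𝒩 g hgmem‖ ≤ Φ.μ * (Φ.D2 * 𝒩.N n v) :=
    Yinf.norm_le' (fun k => by rw [Ymk_seq]; exact hgle k)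
  have hxm : ((p - n : ℤ) : ℝ) * 𝒩.N p (Φ.U p n v) ≤ ‖Ymk 𝒩 f hfmem‖ := by
    have h3 := Yinf.seq_le_norm (Ymk 𝒩 f hfmem) p
    simp only [Ymk_seq, hf, if_pos hp, min_self] at h3
    rw [map_smul_eq_mul, Real.norm_eq_abs,
      abs_of_nonneg (by exact_mod_cast (by omega : (0:ℤ) ≤ p - n) : (0:ℝ) ≤ ((p-n:ℤ):ℝ))]
      at h3
    exact h3
  calc ((p - n : ℤ) : ℝ) * 𝒩.N p (Φ.U p n v) ≤ ‖Ymk 𝒩 f hfmem‖ := hxm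
    _ ≤ Φ.r * ‖Ymk 𝒩 g hgmem‖ := hkey
    _ ≤ Φ.r * (Φ.μ * (Φ.D2 * 𝒩.N n v)) := mul_le_mul_of_nonneg_left hyn Φ.hr
    _ = Φ.c2 * 𝒩.N n v := by rw [c2]; ring

lemma weight_u {n : ℤ} {v : Ed d} (h : Φ.Unstab n v) {p : ℤ} (hp : p ≤ n - 1) :
    ((n - p : ℤ) : ℝ) * 𝒩.N p (Φ.U p n v) ≤ Φ.c2 * 𝒩.N n v := by
  obtain ⟨C, hC⟩ := id h
  set f : ℤ → Ed d := fun k => if k ≤ n-1 then ((n - max k p : ℤ) : ℝ) • Φ.U k n v else 0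
    with hf
  have hfmem : ∃ C', ∀ k, 𝒩.N k (f k) ≤ C' := by
    refine ⟨((n - p : ℤ) : ℝ) * max C 0, fun k => ?_⟩
    have hpn0 : (0:ℝ) ≤ ((n - p : ℤ) : ℝ) := by
      have : (0:ℤ) ≤ n - p := by omega
      exact_mod_cast this
    by_cases hk : k ≤ n-1
    · simp only [hf, if_pos hk]
      rw [map_smul_eq_mul, Real.norm_eq_abs]
      have h1 : |((n - max k p : ℤ) : ℝ)| ≤ ((n - p : ℤ) : ℝ) := by
        rw [abs_of_nonneg (by exact_mod_cast (by omega : (0:ℤ) ≤ n - max k p))]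
        exact_mod_cast (by omega : n - max k p ≤ n - p)
      exact mul_le_mul h1 (le_trans (hC k (by omega)) (le_max_left _ _))
        (apply_nonneg _ _) hpn0
    · simp only [hf, if_neg hk, map_zero]
      exact mul_nonneg hpn0 (le_max_right _ _)
  set g : ℤ → Ed d := fun k => if p+1 ≤ k ∧ k ≤ n then -(Φ.μ • Φ.U k n v) else 0 with hg
  have hb0 : (0:ℝ) ≤ Φ.μ * (Φ.D2 * 𝒩.N n v) :=
    mul_nonneg Φ.hμ.le (mul_nonneg Φ.D2_nonneg (apply_nonneg _ _))
  have hgle : ∀ k, 𝒩.N k (g k) ≤ Φ.μ * (Φ.D2 * 𝒩.N n v) := by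
    intro k
    by_cases hk : p+1 ≤ k ∧ k ≤ n
    · simp only [hg, if_pos hk]
      rw [map_neg_eq_map, map_smul_eq_mul, Real.norm_eq_abs, abs_of_pos Φ.hμ]
      exact mul_le_mul_of_nonneg_left (Φ.tail_u h hk.2) Φ.hμ.le
    · simp only [hg, if_neg hk, map_zero]; exact hb0
  have hgmem : ∃ C', ∀ k, 𝒩.N k (g k) ≤ C' := ⟨_, hgle⟩
  have hxy : ∀ k : ℤ, Φ.μ • ((Ymk 𝒩 f hfmem).seq k - Φ.U k (k-1) ((Ymk 𝒩 f hfmem).seq (k-1)))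
      = (Ymk 𝒩 g hgmem).seq k := by
    intro k
    simp only [Ymk_seq, hf, hg]
    by_cases h1 : k ≤ p
    · rw [if_pos (by omega : k ≤ n-1), if_pos (by omega : k-1 ≤ n-1), map_smul, Φ.hUc,
        if_neg (by omega : ¬ (p+1 ≤ k ∧ k ≤ n))]
      have e1 : max k p = p := max_eq_right h1
      have e2 : max (k-1) p = p := max_eq_right (by omega)
      rw [e1, e2, sub_self, smul_zero]
    · by_cases h2 : k ≤ n-1
      · -- p+1 ≤ k ≤ n-1
        rw [if_pos h2, if_pos (by omega : k-1 ≤ n-1), map_smul, Φ.hUc,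
          if_pos ⟨by omega, by omega⟩]
        have e1 : max k p = k := max_eq_left (by omega)
        have e2 : max (k-1) p = k-1 := max_eq_left (by omega)
        rw [e1, e2, ← sub_smul]
        have e3 : ((n - k : ℤ) : ℝ) - ((n - (k-1) : ℤ) : ℝ) = -1 := by push_cast; ring
        rw [e3, neg_one_smul, smul_neg]
      · by_cases h3 : k = n
        · rw [h3]
          rw [if_neg (by omega : ¬ n ≤ n-1), if_pos (by omega : n-1 ≤ n-1),
            if_pos ⟨by omega, le_refl n⟩]
          have e1 : max (n-1) p = n-1 := max_eq_left hp
          rw [e1]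
          have e2 : ((n - (n-1) : ℤ) : ℝ) = 1 := by push_cast; ring
          rw [e2, one_smul, Φ.U_inv, zero_sub, smul_neg, Φ.hUi]
        · rw [if_neg h2, if_neg (by omega : ¬ k-1 ≤ n-1), map_zero, sub_zero, smul_zero,
            if_neg (by omega : ¬ (p+1 ≤ k ∧ k ≤ n))]
  have hkey := Φ.hkey _ _ hxy
  have hyn : ‖Ymk 𝒩 g hgmem‖ ≤ Φ.μ * (Φ.D2 * 𝒩.N n v) :=
    Yinf.norm_le' (fun k => by rw [Ymk_seq]; exact hgle k)
  have hxm : ((n - p : ℤ) : ℝ) * 𝒩.N p (Φ.U p n v) ≤ ‖Ymk 𝒩 f hfmem‖ := by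
    have h3 := Yinf.seq_le_norm (Ymk 𝒩 f hfmem) p
    simp only [Ymk_seq, hf, if_pos hp, max_self] at h3
    rw [map_smul_eq_mul, Real.norm_eq_abs,
      abs_of_nonneg (by exact_mod_cast (by omega : (0:ℤ) ≤ n - p) : (0:ℝ) ≤ ((n-p:ℤ):ℝ))]
      at h3
    exact h3
  calc ((n - p : ℤ) : ℝ) * 𝒩.N p (Φ.U p n v) ≤ ‖Ymk 𝒩 f hfmem‖ := hxm
    _ ≤ Φ.r * ‖Ymk 𝒩 g hgmem‖ := hkey
    _ ≤ Φ.r * (Φ.μ * (Φ.D2 * 𝒩.N n v)) := mul_le_mul_of_nonneg_left hyn Φ.hr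
    _ = Φ.c2 * 𝒩.N n v := by rw [c2]; ring

lemma uniq {n : ℤ} {v : Ed d} (hs : Φ.Stab n v) (hu : Φ.Unstab n v) : v = 0 := by
  obtain ⟨Cs, hCs⟩ := hs
  obtain ⟨Cu, hCu⟩ := hu
  set f : ℤ → Ed d := fun k => Φ.U k n v with hf
  have hfmem : ∃ C', ∀ k, 𝒩.N k (f k) ≤ C' := by
    refine ⟨max Cs Cu, fun k => ?_⟩
    by_cases hk : n ≤ k
    · exact le_trans (hCs k hk) (le_max_left _ _)
    · exact le_trans (hCu k (by omega)) (le_max_right _ _)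
  have hxy : ∀ k : ℤ, Φ.μ • ((Ymk 𝒩 f hfmem).seq k - Φ.U k (k-1) ((Ymk 𝒩 f hfmem).seq (k-1)))
      = (0 : Yinf 𝒩).seq k := by
    intro k
    simp only [Ymk_seq, hf, Yinf.seq_zero, Φ.hUc, sub_self, smul_zero]
  have hkey := Φ.hkey _ _ hxy
  rw [norm_zero, mul_zero] at hkey
  have h1 : 𝒩.N n v ≤ 0 := by
    have h2 := Yinf.seq_le_norm (Ymk 𝒩 f hfmem) n
    simp only [Ymk_seq, hf, Φ.hUi] at h2
    exact le_trans h2 hkey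
  have h3 : ‖v‖ ≤ 0 := le_trans (𝒩.lower n v) h1
  exact norm_le_zero_iff.mp h3

lemma decomp (n : ℤ) (v : Ed d) : ∃ vs : Ed d, Φ.Stab n vs ∧ Φ.Unstab n (v - vs) ∧
    𝒩.N n vs ≤ Φ.r * Φ.μ * 𝒩.N n v := by
  obtain ⟨y, hy⟩ := Φ.hdecomp n v
  set g : ℤ → Ed d := fun k => if k = n then v else 0 with hg
  have hgmem : ∃ C', ∀ k, 𝒩.N k (g k) ≤ C' := by
    refine ⟨max (𝒩.N n v) 0, fun k => ?_⟩
    by_cases hk : k = n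
    · simp only [hg, if_pos hk, hk]; exact le_max_left _ _
    · simp only [hg, if_neg hk, map_zero]; exact le_max_right _ _
  have hyg : ∀ m : ℤ, Φ.μ • (y.seq m - Φ.U m (m-1) (y.seq (m-1))) = (Ymk 𝒩 g hgmem).seq m := by
    intro m; rw [Ymk_seq]; exact hy m
  have hynorm : ‖y‖ ≤ Φ.r * 𝒩.N n v := by
    have h1 := Φ.hkey y _ hyg
    have h2 : ‖Ymk 𝒩 g hgmem‖ ≤ 𝒩.N n v := by
      refine Yinf.norm_le' (fun k => ?_)
      rw [Ymk_seq]
      by_cases hk : k = n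
      · simp only [hg, if_pos hk, hk, if_true]; exact le_refl _
      · simp only [hg, if_neg hk, map_zero]; exact apply_nonneg _ _
    exact le_trans h1 (mul_le_mul_of_nonneg_left h2 Φ.hr)
  have hrel : ∀ m : ℤ, m ≠ n → y.seq m = Φ.U m (m-1) (y.seq (m-1)) := by
    intro m hm
    have h1 := hy m
    rw [if_neg hm] at h1
    rcases smul_eq_zero.mp h1 with h2 | h2
    · exact absurd h2 Φ.hμ.ne'
    · exact sub_eq_zero.mp h2
  have hup : ∀ j : ℕ, y.seq (n + j) = Φ.U (n + j) n (y.seq n) := by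
    intro j
    induction j with
    | zero => simp [Φ.hUi]
    | succ j ih =>
      have e : (n + (j+1 : ℕ) : ℤ) = (n + j) + 1 := by push_cast; ring
      rw [e, hrel ((n+j)+1) (by omega)]
      have e2 : (n + (j:ℤ)) + 1 - 1 = n + j := by omega
      rw [e2, ih, Φ.hUc]
  have hdown : ∀ j : ℕ, y.seq (n - 1 - j) = Φ.U (n-1-j) (n-1) (y.seq (n-1)) := by
    intro j
    induction j with
    | zero => simp [Φ.hUi]
    | succ j ih =>
      have e : (n - 1 - (j+1 : ℕ) : ℤ) = (n-1-j) - 1 := by push_cast; ring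
      have h3 := hrel (n-1-j) (by omega)
      have h4 : y.seq ((n-1-(j:ℤ))-1) = Φ.U ((n-1-(j:ℤ))-1) (n-1-(j:ℤ)) (y.seq (n-1-(j:ℤ))) := by
        rw [h3, Φ.U_inv]
      rw [e, h4, ih, Φ.hUc]
  refine ⟨Φ.μ • y.seq n, ?_, ?_, ?_⟩
  · refine ⟨Φ.μ * ‖y‖, fun k hk => ?_⟩
    have e : Φ.U k n (Φ.μ • y.seq n) = Φ.μ • y.seq k := by
      rw [map_smul]
      congr 1
      obtain ⟨j, hj⟩ : ∃ j : ℕ, k = n + j := ⟨(k-n).toNat, by omega⟩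
      subst hj
      exact (hup j).symm
    rw [e, map_smul_eq_mul, Real.norm_eq_abs, abs_of_pos Φ.hμ]
    exact mul_le_mul_of_nonneg_left (Yinf.seq_le_norm y k) Φ.hμ.le
  · have hvu : v - Φ.μ • y.seq n = -(Φ.μ • Φ.U n (n-1) (y.seq (n-1))) := by
      have h1 := hy n
      rw [if_pos rfl, smul_sub] at h1
      rw [← h1]; abel
    refine ⟨max (Φ.μ * ‖y‖) (𝒩.N n (v - Φ.μ • y.seq n)), fun k hk => ?_⟩
    rcases eq_or_lt_of_le hk with rfl | hk'
    · rw [Φ.hUi]; exact le_max_right _ _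
    · have e : Φ.U k n (v - Φ.μ • y.seq n) = -(Φ.μ • y.seq k) := by
        rw [hvu, map_neg, map_smul]
        congr 2
        rw [Φ.hUc]
        obtain ⟨j, hj⟩ : ∃ j : ℕ, k = n - 1 - j := ⟨(n-1-k).toNat, by omega⟩
        subst hj
        exact (hdown j).symm
      rw [e, map_neg_eq_map, map_smul_eq_mul, Real.norm_eq_abs, abs_of_pos Φ.hμ]
      exact le_trans (mul_le_mul_of_nonneg_left (Yinf.seq_le_norm y k) Φ.hμ.le)
        (le_max_left _ _)
  · rw [map_smul_eq_mul, Real.norm_eq_abs, abs_of_pos Φ.hμ]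
    calc Φ.μ * 𝒩.N n (y.seq n)
        ≤ Φ.μ * ‖y‖ := mul_le_mul_of_nonneg_left (Yinf.seq_le_norm y n) Φ.hμ.le
      _ ≤ Φ.μ * (Φ.r * 𝒩.N n v) := mul_le_mul_of_nonneg_left hynorm Φ.hμ.le
      _ = Φ.r * Φ.μ * 𝒩.N n v := by ring

end DiscData
namespace DiscData

variable {d : ℕ} {𝒩 : NormFamily d} (Φ : DiscData 𝒩)

/-- the stable projection at integer time `n` -/
def P (n : ℤ) (v : Ed d) : Ed d := (Φ.decomp n v).choose

lemma P_stab (n : ℤ) (v : Ed d) : Φ.Stab n (Φ.P n v) := (Φ.decomp n v).choose_spec.1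

lemma P_unstab (n : ℤ) (v : Ed d) : Φ.Unstab n (v - Φ.P n v) :=
  (Φ.decomp n v).choose_spec.2.1

lemma P_norm (n : ℤ) (v : Ed d) : 𝒩.N n (Φ.P n v) ≤ Φ.r * Φ.μ * 𝒩.N n v :=
  (Φ.decomp n v).choose_spec.2.2

lemma proj_unique {n : ℤ} {v s s' : Ed d} (hs : Φ.Stab n s) (hu : Φ.Unstab n (v - s))
    (hs' : Φ.Stab n s') (hu' : Φ.Unstab n (v - s')) : s = s' := by
  have h1 : Φ.Stab n (s - s') := Φ.stab_sub hs hs'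
  have h2 : Φ.Unstab n (s - s') := by
    have h3 := Φ.unstab_sub hu' hu
    have e : (v - s') - (v - s) = s - s' := by abel
    rwa [e] at h3
  exact sub_eq_zero.mp (Φ.uniq h1 h2)

lemma P_char {n : ℤ} {v s : Ed d} (hs : Φ.Stab n s) (hu : Φ.Unstab n (v - s)) :
    Φ.P n v = s :=
  Φ.proj_unique (Φ.P_stab n v) (Φ.P_unstab n v) hs hu

lemma P_add (n : ℤ) (v w : Ed d) : Φ.P n (v + w) = Φ.P n v + Φ.P n w := by
  refine Φ.P_char (Φ.stab_add (Φ.P_stab n v) (Φ.P_stab n w)) ?_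
  have e : (v + w) - (Φ.P n v + Φ.P n w) = (v - Φ.P n v) + (w - Φ.P n w) := by abel
  rw [e]
  exact Φ.unstab_add (Φ.P_unstab n v) (Φ.P_unstab n w)

lemma P_smul (n : ℤ) (c : ℝ) (v : Ed d) : Φ.P n (c • v) = c • Φ.P n v := by
  refine Φ.P_char (Φ.stab_smul c (Φ.P_stab n v)) ?_
  have e : (c • v) - c • Φ.P n v = c • (v - Φ.P n v) := by rw [smul_sub]
  rw [e]
  exact Φ.unstab_smul c (Φ.P_unstab n v)

lemma P_stab_fix {n : ℤ} {v : Ed d} (h : Φ.Stab n v) : Φ.P n v = v := by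
  refine Φ.P_char h ?_
  rw [sub_self]
  exact Φ.unstab_zero n

lemma P_unstab_zero {n : ℤ} {v : Ed d} (h : Φ.Unstab n v) : Φ.P n v = 0 := by
  refine Φ.P_char (Φ.stab_zero n) ?_
  rwa [sub_zero]

lemma P_idem (n : ℤ) (v : Ed d) : Φ.P n (Φ.P n v) = Φ.P n v :=
  Φ.P_stab_fix (Φ.P_stab n v)

lemma P_comm (m n : ℤ) (v : Ed d) : Φ.P m (Φ.U m n v) = Φ.U m n (Φ.P n v) := by
  refine Φ.P_char (Φ.stab_map (Φ.P_stab n v) m) ?_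
  have e : Φ.U m n v - Φ.U m n (Φ.P n v) = Φ.U m n (v - Φ.P n v) := by rw [map_sub]
  rw [e]
  exact Φ.unstab_map (Φ.P_unstab n v) m

/-- the number of steps after which stable solutions contract by `e⁻¹` -/
def Nz : ℕ := ⌈Real.exp 1 * Φ.c2⌉₊ + 1

lemma Nz_pos : 0 < Φ.Nz := Nat.succ_pos _

lemma Nz_ge : Real.exp 1 * Φ.c2 ≤ (Φ.Nz : ℝ) := by
  refine le_trans (Nat.le_ceil _) ?_
  exact_mod_cast Nat.le_succ _

lemma c2_key : Φ.c2 ≤ Real.exp (-1) * (Φ.Nz : ℝ) := by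
  have h1 := Φ.Nz_ge
  have h2 := Real.exp_pos 1
  rw [Real.exp_neg, inv_mul_eq_div, le_div_iff₀ h2]
  have h3 : Φ.c2 * Real.exp 1 = Real.exp 1 * Φ.c2 := mul_comm _ _
  linarith

lemma step_s {n : ℤ} {v : Ed d} (h : Φ.Stab n v) :
    𝒩.N (n + Φ.Nz) (Φ.U (n + Φ.Nz) n v) ≤ Real.exp (-1) * 𝒩.N n v := by
  have hNz1 : (1:ℤ) ≤ (Φ.Nz:ℤ) := by exact_mod_cast Φ.Nz_pos
  have h1 := Φ.weight_s h (p := n + Φ.Nz) (by omega)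
  have e : ((n + (Φ.Nz:ℤ) - n : ℤ) : ℝ) = (Φ.Nz : ℝ) := by push_cast; ring
  rw [e] at h1
  have hNzpos : (0:ℝ) < (Φ.Nz:ℝ) := by exact_mod_cast Φ.Nz_pos
  have h2 : Φ.c2 * 𝒩.N n v ≤ (Real.exp (-1) * (Φ.Nz:ℝ)) * 𝒩.N n v :=
    mul_le_mul_of_nonneg_right Φ.c2_key (apply_nonneg _ _)
  have h3 : (Φ.Nz:ℝ) * 𝒩.N (n + Φ.Nz) (Φ.U (n + Φ.Nz) n v)
      ≤ (Φ.Nz:ℝ) * (Real.exp (-1) * 𝒩.N n v) := by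
    refine le_trans h1 (le_trans h2 (le_of_eq ?_))
    ring
  exact le_of_mul_le_mul_left h3 hNzpos

lemma step_u {n : ℤ} {v : Ed d} (h : Φ.Unstab n v) :
    𝒩.N (n - Φ.Nz) (Φ.U (n - Φ.Nz) n v) ≤ Real.exp (-1) * 𝒩.N n v := by
  have hNz1 : (1:ℤ) ≤ (Φ.Nz:ℤ) := by exact_mod_cast Φ.Nz_pos
  have h1 := Φ.weight_u h (p := n - Φ.Nz) (by omega)
  have e : ((n - (n - (Φ.Nz:ℤ)) : ℤ) : ℝ) = (Φ.Nz : ℝ) := by push_cast; ring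
  rw [e] at h1
  have hNzpos : (0:ℝ) < (Φ.Nz:ℝ) := by exact_mod_cast Φ.Nz_pos
  have h2 : Φ.c2 * 𝒩.N n v ≤ (Real.exp (-1) * (Φ.Nz:ℝ)) * 𝒩.N n v :=
    mul_le_mul_of_nonneg_right Φ.c2_key (apply_nonneg _ _)
  have h3 : (Φ.Nz:ℝ) * 𝒩.N (n - Φ.Nz) (Φ.U (n - Φ.Nz) n v)
      ≤ (Φ.Nz:ℝ) * (Real.exp (-1) * 𝒩.N n v) := by
    refine le_trans h1 (le_trans h2 (le_of_eq ?_))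
    ring
  exact le_of_mul_le_mul_left h3 hNzpos

lemma iter_s : ∀ (k : ℕ) {n : ℤ} {v : Ed d}, Φ.Stab n v →
    𝒩.N (n + (k * Φ.Nz : ℕ)) (Φ.U (n + (k * Φ.Nz : ℕ)) n v)
      ≤ Real.exp (-(k:ℝ)) * 𝒩.N n v := by
  intro k
  induction k with
  | zero =>
    intro n v _
    simp [Φ.hUi]
  | succ k ih =>
    intro n v h
    have e : (n + ((k+1) * Φ.Nz : ℕ) : ℤ) = (n + (k * Φ.Nz : ℕ)) + (Φ.Nz:ℤ) := by
      push_cast; ring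
    rw [e]
    have hb : Φ.Stab (n + (k * Φ.Nz : ℕ)) (Φ.U (n + (k * Φ.Nz : ℕ)) n v) :=
      Φ.stab_map h _
    have h1 := Φ.step_s hb
    rw [Φ.hUc] at h1
    calc 𝒩.N ((n + (k * Φ.Nz : ℕ)) + (Φ.Nz:ℤ))
          (Φ.U ((n + (k * Φ.Nz : ℕ)) + (Φ.Nz:ℤ)) n v)
        ≤ Real.exp (-1) * 𝒩.N (n + (k * Φ.Nz : ℕ)) (Φ.U (n + (k * Φ.Nz : ℕ)) n v) := h1
      _ ≤ Real.exp (-1) * (Real.exp (-(k:ℝ)) * 𝒩.N n v) :=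
          mul_le_mul_of_nonneg_left (ih h) (Real.exp_nonneg _)
      _ = Real.exp (-((k:ℝ)+1)) * 𝒩.N n v := by
          rw [← mul_assoc, ← Real.exp_add]; ring_nf
      _ = Real.exp (-(((k+1):ℕ):ℝ)) * 𝒩.N n v := by push_cast; ring_nf

lemma iter_u : ∀ (k : ℕ) {n : ℤ} {v : Ed d}, Φ.Unstab n v →
    𝒩.N (n - (k * Φ.Nz : ℕ)) (Φ.U (n - (k * Φ.Nz : ℕ)) n v)
      ≤ Real.exp (-(k:ℝ)) * 𝒩.N n v := by
  intro k
  induction k with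
  | zero =>
    intro n v _
    simp [Φ.hUi]
  | succ k ih =>
    intro n v h
    have e : (n - ((k+1) * Φ.Nz : ℕ) : ℤ) = (n - (k * Φ.Nz : ℕ)) - (Φ.Nz:ℤ) := by
      push_cast; ring
    rw [e]
    have hb : Φ.Unstab (n - (k * Φ.Nz : ℕ)) (Φ.U (n - (k * Φ.Nz : ℕ)) n v) :=
      Φ.unstab_map h _
    have h1 := Φ.step_u hb
    rw [Φ.hUc] at h1
    calc 𝒩.N ((n - (k * Φ.Nz : ℕ)) - (Φ.Nz:ℤ))
          (Φ.U ((n - (k * Φ.Nz : ℕ)) - (Φ.Nz:ℤ)) n v)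
        ≤ Real.exp (-1) * 𝒩.N (n - (k * Φ.Nz : ℕ)) (Φ.U (n - (k * Φ.Nz : ℕ)) n v) := h1
      _ ≤ Real.exp (-1) * (Real.exp (-(k:ℝ)) * 𝒩.N n v) :=
          mul_le_mul_of_nonneg_left (ih h) (Real.exp_nonneg _)
      _ = Real.exp (-((k:ℝ)+1)) * 𝒩.N n v := by
          rw [← mul_assoc, ← Real.exp_add]; ring_nf
      _ = Real.exp (-(((k+1):ℕ):ℝ)) * 𝒩.N n v := by push_cast; ring_nf

lemma decay_s {n : ℤ} {v : Ed d} (h : Φ.Stab n v) {m : ℤ} (hm : n ≤ m) :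
    𝒩.N m (Φ.U m n v) ≤ (Φ.D2 * Real.exp 1)
      * Real.exp (-(1/(Φ.Nz:ℝ)) * ((m:ℝ) - (n:ℝ))) * 𝒩.N n v := by
  have hNzpos : (0:ℝ) < (Φ.Nz:ℝ) := by exact_mod_cast Φ.Nz_pos
  have hNzZ : (0:ℤ) < (Φ.Nz:ℤ) := by exact_mod_cast Φ.Nz_pos
  obtain ⟨q, rem, hdiv, hmod0, hmodlt, hq0⟩ :
      ∃ q rem : ℤ, (Φ.Nz:ℤ) * q + rem = m - n ∧ 0 ≤ rem ∧ rem < (Φ.Nz:ℤ) ∧ 0 ≤ q :=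
    ⟨(m-n)/(Φ.Nz:ℤ), (m-n) % (Φ.Nz:ℤ), Int.mul_ediv_add_emod _ _,
      Int.emod_nonneg _ hNzZ.ne', Int.emod_lt_of_pos _ hNzZ,
      Int.ediv_nonneg (by omega) hNzZ.le⟩
  set k : ℕ := q.toNat with hk
  have hkq : (k:ℤ) = q := Int.toNat_of_nonneg hq0
  have hcomm : (Φ.Nz:ℤ) * q = q * (Φ.Nz:ℤ) := mul_comm _ _
  have hb1 : n + (k:ℤ) * (Φ.Nz:ℤ) ≤ m := by rw [hkq]; omega
  have hb2 : m ≤ n + (k:ℤ) * (Φ.Nz:ℤ) + (Φ.Nz:ℤ) := by rw [hkq]; omega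
  have hiter := Φ.iter_s k h (v := v) (n := n)
  have ecast : (n + ((k * Φ.Nz : ℕ)) : ℤ) = n + (k:ℤ) * (Φ.Nz:ℤ) := by push_cast; ring
  rw [ecast] at hiter
  have hbs : Φ.Stab (n + (k:ℤ) * (Φ.Nz:ℤ)) (Φ.U (n + (k:ℤ) * (Φ.Nz:ℤ)) n v) :=
    Φ.stab_map h _
  have h2 : 𝒩.N m (Φ.U m n v) ≤ Φ.D2 * 𝒩.N (n + (k:ℤ) * (Φ.Nz:ℤ))
      (Φ.U (n + (k:ℤ) * (Φ.Nz:ℤ)) n v) := by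
    have h3 := Φ.tail_s hbs hb1
    rwa [Φ.hUc] at h3
  have h4 : Real.exp (-(k:ℝ)) ≤ Real.exp 1
      * Real.exp (-(1/(Φ.Nz:ℝ)) * ((m:ℝ) - (n:ℝ))) := by
    rw [← Real.exp_add, Real.exp_le_exp]
    have h5 : ((m:ℝ) - n) ≤ ((k:ℝ)+1) * (Φ.Nz:ℝ) := by
      have h6 : (m - n : ℤ) ≤ ((k:ℤ)+1) * (Φ.Nz:ℤ) := by
        have : ((k:ℤ)+1) * (Φ.Nz:ℤ) = (k:ℤ) * (Φ.Nz:ℤ) + (Φ.Nz:ℤ) := by ring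
        omega
      exact_mod_cast h6
    have h6 : (1/(Φ.Nz:ℝ)) * ((m:ℝ) - n) ≤ (k:ℝ)+1 := by
      rw [div_mul_eq_mul_div, one_mul, div_le_iff₀ hNzpos]
      exact h5
    linarith
  calc 𝒩.N m (Φ.U m n v)
      ≤ Φ.D2 * 𝒩.N (n + (k:ℤ) * (Φ.Nz:ℤ)) (Φ.U (n + (k:ℤ) * (Φ.Nz:ℤ)) n v) := h2
    _ ≤ Φ.D2 * (Real.exp (-(k:ℝ)) * 𝒩.N n v) :=
        mul_le_mul_of_nonneg_left hiter Φ.D2_nonneg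
    _ ≤ Φ.D2 * ((Real.exp 1 * Real.exp (-(1/(Φ.Nz:ℝ)) * ((m:ℝ) - (n:ℝ)))) * 𝒩.N n v) :=
        mul_le_mul_of_nonneg_left
          (mul_le_mul_of_nonneg_right h4 (apply_nonneg _ _)) Φ.D2_nonneg
    _ = (Φ.D2 * Real.exp 1) * Real.exp (-(1/(Φ.Nz:ℝ)) * ((m:ℝ) - (n:ℝ))) * 𝒩.N n v := by
        ring

lemma decay_u {n : ℤ} {v : Ed d} (h : Φ.Unstab n v) {m : ℤ} (hm : m ≤ n) :
    𝒩.N m (Φ.U m n v) ≤ (Φ.D2 * Real.exp 1)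
      * Real.exp (-(1/(Φ.Nz:ℝ)) * ((n:ℝ) - (m:ℝ))) * 𝒩.N n v := by
  have hNzpos : (0:ℝ) < (Φ.Nz:ℝ) := by exact_mod_cast Φ.Nz_pos
  have hNzZ : (0:ℤ) < (Φ.Nz:ℤ) := by exact_mod_cast Φ.Nz_pos
  obtain ⟨q, rem, hdiv, hmod0, hmodlt, hq0⟩ :
      ∃ q rem : ℤ, (Φ.Nz:ℤ) * q + rem = n - m ∧ 0 ≤ rem ∧ rem < (Φ.Nz:ℤ) ∧ 0 ≤ q :=
    ⟨(n-m)/(Φ.Nz:ℤ), (n-m) % (Φ.Nz:ℤ), Int.mul_ediv_add_emod _ _,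
      Int.emod_nonneg _ hNzZ.ne', Int.emod_lt_of_pos _ hNzZ,
      Int.ediv_nonneg (by omega) hNzZ.le⟩
  set k : ℕ := q.toNat with hk
  have hkq : (k:ℤ) = q := Int.toNat_of_nonneg hq0
  have hcomm : (Φ.Nz:ℤ) * q = q * (Φ.Nz:ℤ) := mul_comm _ _
  have hb1 : m ≤ n - (k:ℤ) * (Φ.Nz:ℤ) := by rw [hkq]; omega
  have hb2 : n - (k:ℤ) * (Φ.Nz:ℤ) - (Φ.Nz:ℤ) ≤ m := by rw [hkq]; omega
  have hiter := Φ.iter_u k h (v := v) (n := n)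
  have ecast : (n - ((k * Φ.Nz : ℕ)) : ℤ) = n - (k:ℤ) * (Φ.Nz:ℤ) := by push_cast; ring
  rw [ecast] at hiter
  have hbs : Φ.Unstab (n - (k:ℤ) * (Φ.Nz:ℤ)) (Φ.U (n - (k:ℤ) * (Φ.Nz:ℤ)) n v) :=
    Φ.unstab_map h _
  have h2 : 𝒩.N m (Φ.U m n v) ≤ Φ.D2 * 𝒩.N (n - (k:ℤ) * (Φ.Nz:ℤ))
      (Φ.U (n - (k:ℤ) * (Φ.Nz:ℤ)) n v) := by
    have h3 := Φ.tail_u hbs hb1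
    rwa [Φ.hUc] at h3
  have h4 : Real.exp (-(k:ℝ)) ≤ Real.exp 1
      * Real.exp (-(1/(Φ.Nz:ℝ)) * ((n:ℝ) - (m:ℝ))) := by
    rw [← Real.exp_add, Real.exp_le_exp]
    have h5 : ((n:ℝ) - m) ≤ ((k:ℝ)+1) * (Φ.Nz:ℝ) := by
      have h6 : (n - m : ℤ) ≤ ((k:ℤ)+1) * (Φ.Nz:ℤ) := by
        have : ((k:ℤ)+1) * (Φ.Nz:ℤ) = (k:ℤ) * (Φ.Nz:ℤ) + (Φ.Nz:ℤ) := by ring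
        omega
      exact_mod_cast h6
    have h6 : (1/(Φ.Nz:ℝ)) * ((n:ℝ) - m) ≤ (k:ℝ)+1 := by
      rw [div_mul_eq_mul_div, one_mul, div_le_iff₀ hNzpos]
      exact h5
    linarith
  calc 𝒩.N m (Φ.U m n v)
      ≤ Φ.D2 * 𝒩.N (n - (k:ℤ) * (Φ.Nz:ℤ)) (Φ.U (n - (k:ℤ) * (Φ.Nz:ℤ)) n v) := h2
    _ ≤ Φ.D2 * (Real.exp (-(k:ℝ)) * 𝒩.N n v) :=
        mul_le_mul_of_nonneg_left hiter Φ.D2_nonneg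
    _ ≤ Φ.D2 * ((Real.exp 1 * Real.exp (-(1/(Φ.Nz:ℝ)) * ((n:ℝ) - (m:ℝ)))) * 𝒩.N n v) :=
        mul_le_mul_of_nonneg_left
          (mul_le_mul_of_nonneg_right h4 (apply_nonneg _ _)) Φ.D2_nonneg
    _ = (Φ.D2 * Real.exp 1) * Real.exp (-(1/(Φ.Nz:ℝ)) * ((n:ℝ) - (m:ℝ))) * 𝒩.N n v := by
        ring

end DiscData

end ProofAux
set_option maxHeartbeats 2000000 in
theorem resolvent_implies_dichotomy_of_rescaled_family (d : ℕ)
    -- the linear equation x' = A(t) x and its evolution family T(t,s)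
    (A : ℝ → Ed d →L[ℝ] Ed d) (T : ℝ → ℝ → Ed d →L[ℝ] Ed d)
    (hT_id : ∀ t, T t t = ContinuousLinearMap.id ℝ (Ed d))
    (hT_comp : ∀ t s r, (T t s).comp (T s r) = T t r)
    (hT_deriv : ∀ s x t, HasDerivAt (fun τ => T τ s x) (A t (T t s x)) t)
    -- the family of norms ‖·‖_t = N t with its comparison constants
    (N : ℝ → Seminorm ℝ (Ed d)) (C eps : ℝ) (hC : 0 < C) (heps : 0 ≤ eps)
    (hlowN : ∀ (t : ℝ) (x : Ed d), ‖x‖ ≤ N t x)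
    (hupN : ∀ (t : ℝ) (x : Ed d), N t x ≤ C * Real.exp (eps * |t|) * ‖x‖)
    -- x' = A(t)x admits a strong exponential dichotomy w.r.t. the norms ‖·‖_t
    (hSED : SEDfam d (fun t s x => T t s x) N)
    -- the norms at integer times, and the Banach space Y_∞
    (𝒩 : NormFamily d) (h𝒩 : ∀ n : ℤ, 𝒩.N n = N (n : ℝ))
    -- the bounded invertible operator 𝔸 on Y_∞, (𝔸 x)_n = A_{n-1} x_{n-1} = T(n,n-1) x_{n-1}
    (𝔸 : Yinf 𝒩 →L[ℝ] Yinf 𝒩) (h𝔸inv : IsUnit 𝔸)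
    (h𝔸 : ∀ (x : Yinf 𝒩) (n : ℤ),
      (𝔸 x).seq n = T (n : ℝ) ((n - 1 : ℤ) : ℝ) (x.seq (n - 1)))
    -- μ > 0 does not belong to the spectrum of 𝔸
    (μ : ℝ) (hμ : 0 < μ) (hres : μ ∉ spectrum ℝ 𝔸) :
    -- then T_μ(t,s) = μ^{-(t-s)} T(t,s) admits a strong exponential dichotomy
    -- with respect to the norms ‖·‖_t
    SEDfam d (fun t s x => Real.rpow μ (s - t) • T t s x) N := by
  classical
  obtain ⟨Q0, K, lam0, lamBar0, hK, hlam0, hle0, _, _, _, _, hbound⟩ := hSED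
  have hbound' : ∀ t s x, N t (T t s x) ≤ K * Real.exp (lamBar0 * |t - s|) * N s x :=
    hbound
  -- the rescaled continuous cocycle
  set Sc : ℝ → ℝ → Ed d →L[ℝ] Ed d := fun t s => (μ ^ (s - t) : ℝ) • T t s with hSc
  have hScc : ∀ (a b c : ℝ) (x : Ed d), Sc a b (Sc b c x) = Sc a c x := by
    intro a b c x
    have hT : T a b (T b c x) = T a c x := by
      rw [← hT_comp a b c]; rfl
    show (μ ^ (b-a) : ℝ) • T a b ((μ ^ (c-b) : ℝ) • T b c x)
        = (μ ^ (c-a) : ℝ) • T a c x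
    rw [map_smul, smul_smul, hT, ← Real.rpow_add hμ]
    have e : (b-a) + (c-b) = c-a := by ring
    rw [e]
  have hSci : ∀ (t : ℝ) (x : Ed d), Sc t t x = x := by
    intro t x
    show (μ ^ (t-t) : ℝ) • T t t x = x
    rw [sub_self, Real.rpow_zero, one_smul, hT_id]
    rfl
  -- growth bound for the rescaled cocycle
  set gb : ℝ := lamBar0 + |Real.log μ| with hgb
  have hgb0 : 0 ≤ gb := add_nonneg (le_trans hlam0.le hle0) (abs_nonneg _)
  have hgrow : ∀ (t s : ℝ) (x : Ed d),
      N t (Sc t s x) ≤ K * Real.exp (gb * |t - s|) * N s x := by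
    intro t s x
    have h1 : Sc t s x = (μ ^ (s-t) : ℝ) • T t s x := rfl
    rw [h1, map_smul_eq_mul, Real.norm_eq_abs, abs_of_nonneg (Real.rpow_nonneg hμ.le _)]
    have h2 : (μ ^ (s-t) : ℝ) ≤ Real.exp (|Real.log μ| * |t-s|) := by
      rw [Real.rpow_def_of_pos hμ]
      apply Real.exp_le_exp.mpr
      calc Real.log μ * (s-t) ≤ |Real.log μ * (s-t)| := le_abs_self _
        _ = |Real.log μ| * |t-s| := by rw [abs_mul, abs_sub_comm]
    calc (μ ^ (s-t) : ℝ) * N t (T t s x)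
        ≤ Real.exp (|Real.log μ| * |t-s|) * (K * Real.exp (lamBar0 * |t-s|) * N s x) :=
          mul_le_mul h2 (hbound' t s x) (apply_nonneg _ _) (Real.exp_nonneg _)
      _ = K * Real.exp (gb * |t-s|) * N s x := by
          rw [hgb, add_mul, Real.exp_add]; ring
  clear_value gb
  set G1 : ℝ := max 1 (K * Real.exp gb) with hG1def
  have hG1 : 1 ≤ G1 := le_max_left _ _
  -- the resolvent operator
  have hunit : IsUnit ((algebraMap ℝ (Yinf 𝒩 →L[ℝ] Yinf 𝒩)) μ - 𝔸) :=
    spectrum.notMem_iff.mp hres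
  obtain ⟨W, hW⟩ := hunit
  set R' := ((W⁻¹ : (Yinf 𝒩 →L[ℝ] Yinf 𝒩)ˣ) : Yinf 𝒩 →L[ℝ] Yinf 𝒩) with hR'
  -- the relation between 𝔸 and the discrete cocycle
  have hTU : ∀ (n : ℤ) (z : Ed d),
      T (n:ℝ) ((n-1:ℤ):ℝ) z = μ • Sc (n:ℝ) ((n-1:ℤ):ℝ) z := by
    intro n z
    show T (n:ℝ) ((n-1:ℤ):ℝ) z
        = μ • ((μ ^ ((((n-1:ℤ)):ℝ) - ((n:ℤ):ℝ)) : ℝ) • T (n:ℝ) ((n-1:ℤ):ℝ) z)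
    have e : (((n-1:ℤ):ℝ)) - ((n:ℤ):ℝ) = -1 := by push_cast; ring
    rw [e, Real.rpow_neg_one, smul_smul, mul_inv_cancel₀ hμ.ne', one_smul]
  have hEseq : ∀ (x : Yinf 𝒩) (n : ℤ),
      (((algebraMap ℝ (Yinf 𝒩 →L[ℝ] Yinf 𝒩)) μ - 𝔸) x).seq n
        = μ • (x.seq n - Sc (n:ℝ) ((n-1:ℤ):ℝ) (x.seq (n-1))) := by
    intro x n
    have h1 : ((algebraMap ℝ (Yinf 𝒩 →L[ℝ] Yinf 𝒩)) μ - 𝔸) x = μ • x - 𝔸 x := by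
      rw [Algebra.algebraMap_eq_smul_one, ContinuousLinearMap.sub_apply,
        ContinuousLinearMap.smul_apply, ContinuousLinearMap.one_apply]
    rw [h1, Yinf.seq_sub, Yinf.seq_smul, h𝔸, hTU, smul_sub]
  have hkeyD : ∀ x y : Yinf 𝒩,
      (∀ n : ℤ, μ • (x.seq n - Sc (n:ℝ) ((n-1:ℤ):ℝ) (x.seq (n-1))) = y.seq n) →
      ‖x‖ ≤ ‖R'‖ * ‖y‖ := by
    intro x y hxy
    have h2 : ((algebraMap ℝ (Yinf 𝒩 →L[ℝ] Yinf 𝒩)) μ - 𝔸) x = y :=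
      Yinf.ext' (fun n => by rw [hEseq]; exact hxy n)
    have h4 : R' (((algebraMap ℝ (Yinf 𝒩 →L[ℝ] Yinf 𝒩)) μ - 𝔸) x) = x := by
      rw [← hW]
      calc (↑W⁻¹ : Yinf 𝒩 →L[ℝ] Yinf 𝒩) ((↑W : Yinf 𝒩 →L[ℝ] Yinf 𝒩) x)
          = ((↑W⁻¹ * ↑W : Yinf 𝒩 →L[ℝ] Yinf 𝒩)) x := rfl
        _ = (1 : Yinf 𝒩 →L[ℝ] Yinf 𝒩) x := by rw [Units.inv_mul]
        _ = x := rfl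
    have h3 : x = R' y := by rw [← h2]; exact h4.symm
    rw [h3]
    exact R'.le_opNorm y
  have hdecompD : ∀ (n : ℤ) (v : Ed d), ∃ y : Yinf 𝒩,
      ∀ m : ℤ, μ • (y.seq m - Sc (m:ℝ) ((m-1:ℤ):ℝ) (y.seq (m-1)))
        = (if m = n then v else 0) := by
    intro n v
    set g : ℤ → Ed d := fun k => if k = n then v else 0 with hgdef
    have hgmem : ∃ C', ∀ k, 𝒩.N k (g k) ≤ C' := by
      refine ⟨max (𝒩.N n v) 0, fun k => ?_⟩
      by_cases hk : k = n
      · simp only [hgdef, if_pos hk, hk]; exact le_max_left _ _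
      · simp only [hgdef, if_neg hk, map_zero]; exact le_max_right _ _
    set dl : Yinf 𝒩 := Ymk 𝒩 g hgmem with hdl
    refine ⟨R' dl, fun m => ?_⟩
    have hWy : ((algebraMap ℝ (Yinf 𝒩 →L[ℝ] Yinf 𝒩)) μ - 𝔸) (R' dl) = dl := by
      rw [← hW]
      calc (↑W : Yinf 𝒩 →L[ℝ] Yinf 𝒩) ((↑W⁻¹ : Yinf 𝒩 →L[ℝ] Yinf 𝒩) dl)
          = ((↑W * ↑W⁻¹ : Yinf 𝒩 →L[ℝ] Yinf 𝒩)) dl := rfl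
        _ = (1 : Yinf 𝒩 →L[ℝ] Yinf 𝒩) dl := by rw [Units.mul_inv]
        _ = dl := rfl
    rw [← hEseq (R' dl) m, hWy]
    rfl
  -- one-step bounds at integer times
  have hstepD : ∀ (n : ℤ) (x : Ed d),
      𝒩.N (n+1) (Sc ((n+1:ℤ):ℝ) ((n:ℤ):ℝ) x) ≤ G1 * 𝒩.N n x := by
    intro n x
    rw [h𝒩, h𝒩]
    have h1 := hgrow ((n+1:ℤ):ℝ) ((n:ℤ):ℝ) x
    have e : |((n+1:ℤ):ℝ) - ((n:ℤ):ℝ)| = 1 := by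
      push_cast; rw [add_sub_cancel_left]; exact abs_one
    rw [e, mul_one] at h1
    refine le_trans h1 (mul_le_mul_of_nonneg_right ?_ (apply_nonneg _ _))
    exact le_max_right _ _
  have hstepbD : ∀ (n : ℤ) (x : Ed d),
      𝒩.N n (Sc ((n:ℤ):ℝ) ((n+1:ℤ):ℝ) x) ≤ G1 * 𝒩.N (n+1) x := by
    intro n x
    rw [h𝒩, h𝒩]
    have h1 := hgrow ((n:ℤ):ℝ) ((n+1:ℤ):ℝ) x
    have e : |((n:ℤ):ℝ) - ((n+1:ℤ):ℝ)| = 1 := by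
      push_cast
      have e2 : (n:ℝ) - ((n:ℝ)+1) = -1 := by ring
      rw [e2, abs_neg, abs_one]
    rw [e, mul_one] at h1
    refine le_trans h1 (mul_le_mul_of_nonneg_right ?_ (apply_nonneg _ _))
    exact le_max_right _ _
  -- package the discrete data
  set Φ : DiscData 𝒩 :=
    { U := fun m n => Sc (m:ℝ) (n:ℝ)
      μ := μ
      r := ‖R'‖
      G1 := G1
      hμ := hμ
      hr := norm_nonneg _
      hG1 := hG1
      hUc := fun k m n x => hScc _ _ _ x
      hUi := fun n x => hSci _ x
      hstep := hstepD
      hstepb := hstepbD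
      hkey := hkeyD
      hdecomp := hdecompD } with hΦ
  have hUisSc : ∀ (m n : ℤ) (z : Ed d), Φ.U m n z = Sc ((m:ℤ):ℝ) ((n:ℤ):ℝ) z :=
    fun _ _ _ => rfl
  -- continuous-time projections
  set PL : ℤ → Ed d →L[ℝ] Ed d := fun n => LinearMap.toContinuousLinearMap
    { toFun := Φ.P n
      map_add' := Φ.P_add n
      map_smul' := Φ.P_smul n } with hPL
  have hPLa : ∀ (n : ℤ) (v : Ed d), PL n v = Φ.P n v := fun n v => rfl
  set QQ : ℝ → Ed d →L[ℝ] Ed d :=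
    fun t => (Sc t ((⌈t⌉:ℤ):ℝ)).comp ((PL ⌈t⌉).comp (Sc ((⌈t⌉:ℤ):ℝ) t)) with hQQ
  have hQa : ∀ (t : ℝ) (x : Ed d),
      QQ t x = Sc t ((⌈t⌉:ℤ):ℝ) (Φ.P ⌈t⌉ (Sc ((⌈t⌉:ℤ):ℝ) t x)) := fun t x => rfl
  clear_value PL QQ Φ
  -- constants
  have hNzpos : (0:ℝ) < ((Φ.Nz:ℕ):ℝ) := by exact_mod_cast Φ.Nz_pos
  set lamd : ℝ := 1 / ((Φ.Nz : ℕ) : ℝ) with hlamddef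
  have hlamd : 0 < lamd := by rw [hlamddef]; positivity
  have hD2 : 0 ≤ Φ.D2 := Φ.D2_nonneg
  have hrmu : 0 ≤ Φ.r * Φ.μ := Φ.rmu_nonneg
  have hKe : 0 ≤ K * Real.exp gb := mul_nonneg hK.le (Real.exp_nonneg _)
  have hDe : 0 ≤ Φ.D2 * Real.exp 1 := mul_nonneg hD2 (Real.exp_nonneg _)
  set KF : ℝ := K^2 * Real.exp (2*gb) * (Φ.D2 * Real.exp 1) * (1 + Φ.r * Φ.μ)
      * Real.exp lamd + K with hKFdef
  have hterm1 : 0 ≤ K^2 * Real.exp (2*gb) * (Φ.D2 * Real.exp 1) * (1 + Φ.r * Φ.μ)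
      * Real.exp lamd := by
    refine mul_nonneg (mul_nonneg (mul_nonneg (mul_nonneg (sq_nonneg K)
      (Real.exp_nonneg _)) hDe) (by linarith)) (Real.exp_nonneg _)
  have hKF : 0 < KF := by rw [hKFdef]; linarith
  set lamBarF : ℝ := lamd + gb with hlamBarFdef
  have hlele : lamd ≤ lamBarF := by rw [hlamBarFdef]; linarith
  have hcoeff : K^2 * Real.exp (2*gb) * (Φ.D2 * Real.exp 1) * (Φ.r * Φ.μ)
      * Real.exp lamd ≤ KF := by
    have h7 : K^2 * Real.exp (2*gb) * (Φ.D2 * Real.exp 1) * (Φ.r * Φ.μ) * Real.exp lamd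
        ≤ K^2 * Real.exp (2*gb) * (Φ.D2 * Real.exp 1) * (1 + Φ.r * Φ.μ)
          * Real.exp lamd := by
      refine mul_le_mul_of_nonneg_right ?_ (Real.exp_nonneg _)
      refine mul_le_mul_of_nonneg_left (by linarith) ?_
      exact mul_nonneg (mul_nonneg (sq_nonneg K) (Real.exp_nonneg _)) hDe
    rw [hKFdef]
    linarith [hK.le]
  have hcoeff' : K^2 * Real.exp (2*gb) * (Φ.D2 * Real.exp 1) * (1 + Φ.r * Φ.μ)
      * Real.exp lamd ≤ KF := by
    rw [hKFdef]; linarith [hK.le]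
  clear_value lamd KF lamBarF
  refine ⟨QQ, KF, lamd, lamBarF, hKF, hlamd, hlele, ?_, ?_, ?_, ?_, ?_⟩
  · -- idempotency
    intro t
    apply ContinuousLinearMap.ext
    intro x
    show QQ t (QQ t x) = QQ t x
    rw [hQa t (QQ t x), hQa t x, hScc ((⌈t⌉:ℤ):ℝ) t ((⌈t⌉:ℤ):ℝ), hSci,
      Φ.P_idem]
  · -- commutation
    intro t s x
    show Sc t s (QQ s x) = QQ t (Sc t s x)
    rw [hQa s x, hQa t (Sc t s x),
      hScc t s ((⌈s⌉:ℤ):ℝ) (Φ.P ⌈s⌉ (Sc ((⌈s⌉:ℤ):ℝ) s x)),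
      hScc ((⌈t⌉:ℤ):ℝ) t s x,
      ← hScc ((⌈t⌉:ℤ):ℝ) ((⌈s⌉:ℤ):ℝ) s x]
    have hPcomm : Φ.P ⌈t⌉ (Sc ((⌈t⌉:ℤ):ℝ) ((⌈s⌉:ℤ):ℝ) (Sc ((⌈s⌉:ℤ):ℝ) s x))
        = Sc ((⌈t⌉:ℤ):ℝ) ((⌈s⌉:ℤ):ℝ) (Φ.P ⌈s⌉ (Sc ((⌈s⌉:ℤ):ℝ) s x)) := by
      rw [← hUisSc, ← hUisSc]
      exact Φ.P_comm ⌈t⌉ ⌈s⌉ _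
    rw [hPcomm, hScc t ((⌈t⌉:ℤ):ℝ) ((⌈s⌉:ℤ):ℝ)]
  · -- stable estimate
    intro t s x hts
    have hmn : ⌈s⌉ ≤ ⌈t⌉ := Int.ceil_le_ceil hts
    have hwst : Φ.Stab ⌈s⌉ (Φ.P ⌈s⌉ (Sc ((⌈s⌉:ℤ):ℝ) s x)) := Φ.P_stab ⌈s⌉ _
    show N t (Sc t s (QQ s x)) ≤ KF * Real.exp (-lamd * (t - s)) * N s x
    have e1 : Sc t s (QQ s x) = Sc t ((⌈t⌉:ℤ):ℝ) (Sc ((⌈t⌉:ℤ):ℝ) ((⌈s⌉:ℤ):ℝ)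
        (Φ.P ⌈s⌉ (Sc ((⌈s⌉:ℤ):ℝ) s x))) := by
      rw [hQa s x, hScc t s ((⌈s⌉:ℤ):ℝ), hScc t ((⌈t⌉:ℤ):ℝ) ((⌈s⌉:ℤ):ℝ)]
    rw [e1]
    have hceil_t1 := Int.le_ceil t
    have hceil_t2 := Int.ceil_lt_add_one t
    have hceil_s1 := Int.le_ceil s
    have hceil_s2 := Int.ceil_lt_add_one s
    have habs1 : |t - ((⌈t⌉:ℤ):ℝ)| ≤ 1 := by
      rw [abs_sub_comm, abs_of_nonneg (by linarith)]
      linarith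
    have habs2 : |((⌈s⌉:ℤ):ℝ) - s| ≤ 1 := by
      rw [abs_of_nonneg (by linarith)]
      linarith
    have hA : N t (Sc t ((⌈t⌉:ℤ):ℝ) (Sc ((⌈t⌉:ℤ):ℝ) ((⌈s⌉:ℤ):ℝ)
        (Φ.P ⌈s⌉ (Sc ((⌈s⌉:ℤ):ℝ) s x))))
        ≤ (K * Real.exp gb) * N ((⌈t⌉:ℤ):ℝ) (Sc ((⌈t⌉:ℤ):ℝ) ((⌈s⌉:ℤ):ℝ)
          (Φ.P ⌈s⌉ (Sc ((⌈s⌉:ℤ):ℝ) s x))) := by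
      refine le_trans (hgrow t ((⌈t⌉:ℤ):ℝ) _) ?_
      refine mul_le_mul_of_nonneg_right ?_ (apply_nonneg _ _)
      refine mul_le_mul_of_nonneg_left (Real.exp_le_exp.mpr ?_) hK.le
      calc gb * |t - ((⌈t⌉:ℤ):ℝ)| ≤ gb * 1 := mul_le_mul_of_nonneg_left habs1 hgb0
        _ = gb := mul_one gb
    have hB : N ((⌈t⌉:ℤ):ℝ) (Sc ((⌈t⌉:ℤ):ℝ) ((⌈s⌉:ℤ):ℝ)
        (Φ.P ⌈s⌉ (Sc ((⌈s⌉:ℤ):ℝ) s x)))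
        ≤ (Φ.D2 * Real.exp 1)
          * Real.exp (-lamd * (((⌈t⌉:ℤ):ℝ) - ((⌈s⌉:ℤ):ℝ)))
          * N ((⌈s⌉:ℤ):ℝ) (Φ.P ⌈s⌉ (Sc ((⌈s⌉:ℤ):ℝ) s x)) := by
      have h1 := Φ.decay_s hwst hmn
      rw [h𝒩 ⌈t⌉, h𝒩 ⌈s⌉, hUisSc] at h1
      rw [hlamddef]
      exact h1
    have hC1 : N ((⌈s⌉:ℤ):ℝ) (Φ.P ⌈s⌉ (Sc ((⌈s⌉:ℤ):ℝ) s x))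
        ≤ (Φ.r * Φ.μ) * N ((⌈s⌉:ℤ):ℝ) (Sc ((⌈s⌉:ℤ):ℝ) s x) := by
      have h1 := Φ.P_norm ⌈s⌉ (Sc ((⌈s⌉:ℤ):ℝ) s x)
      rw [h𝒩 ⌈s⌉] at h1
      exact h1
    have hD1 : N ((⌈s⌉:ℤ):ℝ) (Sc ((⌈s⌉:ℤ):ℝ) s x) ≤ (K * Real.exp gb) * N s x := by
      refine le_trans (hgrow ((⌈s⌉:ℤ):ℝ) s x) ?_
      refine mul_le_mul_of_nonneg_right ?_ (apply_nonneg _ _)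
      refine mul_le_mul_of_nonneg_left (Real.exp_le_exp.mpr ?_) hK.le
      calc gb * |((⌈s⌉:ℤ):ℝ) - s| ≤ gb * 1 := mul_le_mul_of_nonneg_left habs2 hgb0
        _ = gb := mul_one gb
    have hE : Real.exp (-lamd * (((⌈t⌉:ℤ):ℝ) - ((⌈s⌉:ℤ):ℝ)))
        ≤ Real.exp lamd * Real.exp (-lamd * (t - s)) := by
      rw [← Real.exp_add, Real.exp_le_exp]
      have hfrac : (t - s) - (((⌈t⌉:ℤ):ℝ) - ((⌈s⌉:ℤ):ℝ)) ≤ 1 := by linarith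
      nlinarith [mul_le_mul_of_nonneg_left hfrac hlamd.le]
    calc N t (Sc t ((⌈t⌉:ℤ):ℝ) (Sc ((⌈t⌉:ℤ):ℝ) ((⌈s⌉:ℤ):ℝ)
          (Φ.P ⌈s⌉ (Sc ((⌈s⌉:ℤ):ℝ) s x))))
        ≤ (K * Real.exp gb) * N ((⌈t⌉:ℤ):ℝ) (Sc ((⌈t⌉:ℤ):ℝ) ((⌈s⌉:ℤ):ℝ)
          (Φ.P ⌈s⌉ (Sc ((⌈s⌉:ℤ):ℝ) s x))) := hA
      _ ≤ (K * Real.exp gb) * ((Φ.D2 * Real.exp 1)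
          * Real.exp (-lamd * (((⌈t⌉:ℤ):ℝ) - ((⌈s⌉:ℤ):ℝ)))
          * N ((⌈s⌉:ℤ):ℝ) (Φ.P ⌈s⌉ (Sc ((⌈s⌉:ℤ):ℝ) s x))) :=
          mul_le_mul_of_nonneg_left hB hKe
      _ ≤ (K * Real.exp gb) * ((Φ.D2 * Real.exp 1)
          * Real.exp (-lamd * (((⌈t⌉:ℤ):ℝ) - ((⌈s⌉:ℤ):ℝ)))
          * ((Φ.r * Φ.μ) * ((K * Real.exp gb) * N s x))) := by
          refine mul_le_mul_of_nonneg_left ?_ hKe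
          refine mul_le_mul_of_nonneg_left ?_ (mul_nonneg hDe (Real.exp_nonneg _))
          exact le_trans hC1 (mul_le_mul_of_nonneg_left hD1 hrmu)
      _ ≤ (K * Real.exp gb) * ((Φ.D2 * Real.exp 1)
          * (Real.exp lamd * Real.exp (-lamd * (t - s)))
          * ((Φ.r * Φ.μ) * ((K * Real.exp gb) * N s x))) := by
          refine mul_le_mul_of_nonneg_left ?_ hKe
          refine mul_le_mul_of_nonneg_right ?_
            (mul_nonneg hrmu (mul_nonneg hKe (apply_nonneg _ _)))
          exact mul_le_mul_of_nonneg_left hE hDe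
      _ = (K^2 * Real.exp (2*gb) * (Φ.D2 * Real.exp 1) * (Φ.r * Φ.μ) * Real.exp lamd)
          * Real.exp (-lamd * (t - s)) * N s x := by
          rw [show (2:ℝ)*gb = gb + gb by ring, Real.exp_add]; ring
      _ ≤ KF * Real.exp (-lamd * (t - s)) * N s x := by
          exact mul_le_mul_of_nonneg_right
            (mul_le_mul_of_nonneg_right hcoeff (Real.exp_nonneg _)) (apply_nonneg _ _)
  · -- unstable estimate
    intro t s x hts
    have hmn : ⌈t⌉ ≤ ⌈s⌉ := Int.ceil_le_ceil hts
    have hwun : Φ.Unstab ⌈s⌉ ((Sc ((⌈s⌉:ℤ):ℝ) s x) - Φ.P ⌈s⌉ (Sc ((⌈s⌉:ℤ):ℝ) s x)) :=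
      Φ.P_unstab ⌈s⌉ _
    show N t (Sc t s (x - QQ s x)) ≤ KF * Real.exp (-lamd * (s - t)) * N s x
    have e2 : x - QQ s x = Sc s ((⌈s⌉:ℤ):ℝ)
        ((Sc ((⌈s⌉:ℤ):ℝ) s x) - Φ.P ⌈s⌉ (Sc ((⌈s⌉:ℤ):ℝ) s x)) := by
      rw [map_sub, hQa s x, hScc s ((⌈s⌉:ℤ):ℝ) s x, hSci]
    have e1 : Sc t s (x - QQ s x) = Sc t ((⌈t⌉:ℤ):ℝ) (Sc ((⌈t⌉:ℤ):ℝ) ((⌈s⌉:ℤ):ℝ)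
        ((Sc ((⌈s⌉:ℤ):ℝ) s x) - Φ.P ⌈s⌉ (Sc ((⌈s⌉:ℤ):ℝ) s x))) := by
      rw [e2, hScc t s ((⌈s⌉:ℤ):ℝ), hScc t ((⌈t⌉:ℤ):ℝ) ((⌈s⌉:ℤ):ℝ)]
    rw [e1]
    have hceil_t1 := Int.le_ceil t
    have hceil_t2 := Int.ceil_lt_add_one t
    have hceil_s1 := Int.le_ceil s
    have hceil_s2 := Int.ceil_lt_add_one s
    have habs1 : |t - ((⌈t⌉:ℤ):ℝ)| ≤ 1 := by
      rw [abs_sub_comm, abs_of_nonneg (by linarith)]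
      linarith
    have habs2 : |((⌈s⌉:ℤ):ℝ) - s| ≤ 1 := by
      rw [abs_of_nonneg (by linarith)]
      linarith
    have hA : N t (Sc t ((⌈t⌉:ℤ):ℝ) (Sc ((⌈t⌉:ℤ):ℝ) ((⌈s⌉:ℤ):ℝ)
        ((Sc ((⌈s⌉:ℤ):ℝ) s x) - Φ.P ⌈s⌉ (Sc ((⌈s⌉:ℤ):ℝ) s x))))
        ≤ (K * Real.exp gb) * N ((⌈t⌉:ℤ):ℝ) (Sc ((⌈t⌉:ℤ):ℝ) ((⌈s⌉:ℤ):ℝ)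
          ((Sc ((⌈s⌉:ℤ):ℝ) s x) - Φ.P ⌈s⌉ (Sc ((⌈s⌉:ℤ):ℝ) s x))) := by
      refine le_trans (hgrow t ((⌈t⌉:ℤ):ℝ) _) ?_
      refine mul_le_mul_of_nonneg_right ?_ (apply_nonneg _ _)
      refine mul_le_mul_of_nonneg_left (Real.exp_le_exp.mpr ?_) hK.le
      calc gb * |t - ((⌈t⌉:ℤ):ℝ)| ≤ gb * 1 := mul_le_mul_of_nonneg_left habs1 hgb0
        _ = gb := mul_one gb
    have hB : N ((⌈t⌉:ℤ):ℝ) (Sc ((⌈t⌉:ℤ):ℝ) ((⌈s⌉:ℤ):ℝ)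
        ((Sc ((⌈s⌉:ℤ):ℝ) s x) - Φ.P ⌈s⌉ (Sc ((⌈s⌉:ℤ):ℝ) s x)))
        ≤ (Φ.D2 * Real.exp 1)
          * Real.exp (-lamd * (((⌈s⌉:ℤ):ℝ) - ((⌈t⌉:ℤ):ℝ)))
          * N ((⌈s⌉:ℤ):ℝ) ((Sc ((⌈s⌉:ℤ):ℝ) s x) - Φ.P ⌈s⌉ (Sc ((⌈s⌉:ℤ):ℝ) s x)) := by
      have h1 := Φ.decay_u hwun hmn
      rw [h𝒩 ⌈t⌉, h𝒩 ⌈s⌉, hUisSc] at h1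
      rw [hlamddef]
      exact h1
    have hC1 : N ((⌈s⌉:ℤ):ℝ) ((Sc ((⌈s⌉:ℤ):ℝ) s x) - Φ.P ⌈s⌉ (Sc ((⌈s⌉:ℤ):ℝ) s x))
        ≤ (1 + Φ.r * Φ.μ) * N ((⌈s⌉:ℤ):ℝ) (Sc ((⌈s⌉:ℤ):ℝ) s x) := by
      have h1 := Φ.P_norm ⌈s⌉ (Sc ((⌈s⌉:ℤ):ℝ) s x)
      rw [h𝒩 ⌈s⌉] at h1
      have h2 : N ((⌈s⌉:ℤ):ℝ) ((Sc ((⌈s⌉:ℤ):ℝ) s x) - Φ.P ⌈s⌉ (Sc ((⌈s⌉:ℤ):ℝ) s x))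
          ≤ N ((⌈s⌉:ℤ):ℝ) (Sc ((⌈s⌉:ℤ):ℝ) s x)
            + N ((⌈s⌉:ℤ):ℝ) (Φ.P ⌈s⌉ (Sc ((⌈s⌉:ℤ):ℝ) s x)) := by
        rw [sub_eq_add_neg]
        refine le_trans (map_add_le_add _ _ _) ?_
        rw [map_neg_eq_map]
      rw [one_add_mul]
      linarith
    have hD1 : N ((⌈s⌉:ℤ):ℝ) (Sc ((⌈s⌉:ℤ):ℝ) s x) ≤ (K * Real.exp gb) * N s x := by
      refine le_trans (hgrow ((⌈s⌉:ℤ):ℝ) s x) ?_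
      refine mul_le_mul_of_nonneg_right ?_ (apply_nonneg _ _)
      refine mul_le_mul_of_nonneg_left (Real.exp_le_exp.mpr ?_) hK.le
      calc gb * |((⌈s⌉:ℤ):ℝ) - s| ≤ gb * 1 := mul_le_mul_of_nonneg_left habs2 hgb0
        _ = gb := mul_one gb
    have hE : Real.exp (-lamd * (((⌈s⌉:ℤ):ℝ) - ((⌈t⌉:ℤ):ℝ)))
        ≤ Real.exp lamd * Real.exp (-lamd * (s - t)) := by
      rw [← Real.exp_add, Real.exp_le_exp]
      have hfrac : (s - t) - (((⌈s⌉:ℤ):ℝ) - ((⌈t⌉:ℤ):ℝ)) ≤ 1 := by linarith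
      nlinarith [mul_le_mul_of_nonneg_left hfrac hlamd.le]
    calc N t (Sc t ((⌈t⌉:ℤ):ℝ) (Sc ((⌈t⌉:ℤ):ℝ) ((⌈s⌉:ℤ):ℝ)
          ((Sc ((⌈s⌉:ℤ):ℝ) s x) - Φ.P ⌈s⌉ (Sc ((⌈s⌉:ℤ):ℝ) s x))))
        ≤ (K * Real.exp gb) * N ((⌈t⌉:ℤ):ℝ) (Sc ((⌈t⌉:ℤ):ℝ) ((⌈s⌉:ℤ):ℝ)
          ((Sc ((⌈s⌉:ℤ):ℝ) s x) - Φ.P ⌈s⌉ (Sc ((⌈s⌉:ℤ):ℝ) s x))) := hA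
      _ ≤ (K * Real.exp gb) * ((Φ.D2 * Real.exp 1)
          * Real.exp (-lamd * (((⌈s⌉:ℤ):ℝ) - ((⌈t⌉:ℤ):ℝ)))
          * N ((⌈s⌉:ℤ):ℝ) ((Sc ((⌈s⌉:ℤ):ℝ) s x) - Φ.P ⌈s⌉ (Sc ((⌈s⌉:ℤ):ℝ) s x))) :=
          mul_le_mul_of_nonneg_left hB hKe
      _ ≤ (K * Real.exp gb) * ((Φ.D2 * Real.exp 1)
          * Real.exp (-lamd * (((⌈s⌉:ℤ):ℝ) - ((⌈t⌉:ℤ):ℝ)))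
          * ((1 + Φ.r * Φ.μ) * ((K * Real.exp gb) * N s x))) := by
          refine mul_le_mul_of_nonneg_left ?_ hKe
          refine mul_le_mul_of_nonneg_left ?_ (mul_nonneg hDe (Real.exp_nonneg _))
          exact le_trans hC1 (mul_le_mul_of_nonneg_left hD1 (by linarith))
      _ ≤ (K * Real.exp gb) * ((Φ.D2 * Real.exp 1)
          * (Real.exp lamd * Real.exp (-lamd * (s - t)))
          * ((1 + Φ.r * Φ.μ) * ((K * Real.exp gb) * N s x))) := by
          refine mul_le_mul_of_nonneg_left ?_ hKe
          refine mul_le_mul_of_nonneg_right ?_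
            (mul_nonneg (by linarith) (mul_nonneg hKe (apply_nonneg _ _)))
          exact mul_le_mul_of_nonneg_left hE hDe
      _ = (K^2 * Real.exp (2*gb) * (Φ.D2 * Real.exp 1) * (1 + Φ.r * Φ.μ)
          * Real.exp lamd) * Real.exp (-lamd * (s - t)) * N s x := by
          rw [show (2:ℝ)*gb = gb + gb by ring, Real.exp_add]; ring
      _ ≤ KF * Real.exp (-lamd * (s - t)) * N s x := by
          exact mul_le_mul_of_nonneg_right
            (mul_le_mul_of_nonneg_right hcoeff' (Real.exp_nonneg _)) (apply_nonneg _ _)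
  · -- growth
    intro t s x
    show N t (Sc t s x) ≤ KF * Real.exp (lamBarF * |t - s|) * N s x
    have h1 := hgrow t s x
    have h3 : Real.exp (gb * |t-s|) ≤ Real.exp (lamBarF * |t-s|) :=
      Real.exp_le_exp.mpr (mul_le_mul_of_nonneg_right
        (by rw [hlamBarFdef]; linarith) (abs_nonneg _))
    have h4 : K ≤ KF := by rw [hKFdef]; linarith
    have h2 : K * Real.exp (gb * |t-s|) ≤ KF * Real.exp (lamBarF * |t-s|) :=
      mul_le_mul h4 h3 (Real.exp_nonneg _) (le_trans hK.le h4)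
    exact le_trans h1 (mul_le_mul_of_nonneg_right h2 (apply_nonneg _ _))

end
end

section
/- Suppose ‖T(t,s)‖ ≤ Me^{λ̄|t−s|+ε|s|} for all t,s, and f satisfies (F3) with η ≤ 1. Define f_n(x) := φ(n+1,n;x) − T(n+1,n)x. Then with M̃ := Me^{λ̄}·e^{Me^{λ̄+2ε}} one has ‖Df_n(x)‖ ≤ MM̃ηe^{λ̄+3ε+1}·e^{−ε|n|} for every n ∈ ℤ and x ∈ ℝ^d; in particular there is a constant η̃ > 0, proportional to η, with ‖Df_n(x)‖ ≤ η̃e^{−ε|n|} for all n and x. -/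
/- STATEMENT 12: A bound for the derivative of the discretized perturbation
f_n(x) = φ(n+1,n;x) − T(n+1,n)x: with M̃ = M e^{λ̄} e^{M e^{λ̄+2ε}} one has
‖Df_n(x)‖ ≤ M M̃ η e^{λ̄+3ε+1} e^{−ε|n|}; in particular ‖Df_n(x)‖ ≤ η̃ e^{−ε|n|}
for a constant η̃ > 0 proportional to η. -/

noncomputable section

open MeasureTheory Set

/-- composing an interval integrable function with a CLM preserves interval integrability -/
lemma IntervalIntegrable.clm_apply' {E F : Type*} [NormedAddCommGroup E] [NormedSpace ℝ E]
    [NormedAddCommGroup F] [NormedSpace ℝ F] {f : ℝ → E} {a b : ℝ}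
    (h : IntervalIntegrable f volume a b) (L : E →L[ℝ] F) :
    IntervalIntegrable (fun s => L (f s)) volume a b :=
  ⟨L.integrable_comp h.1, L.integrable_comp h.2⟩

/-- in finite dimension, pointwise continuity of an operator family gives norm continuity -/
lemma cont_of_pointwise {d : ℕ} {T : ℝ → Ed d →L[ℝ] Ed d}
    (hpt : ∀ y : Ed d, Continuous fun t => T t y) : Continuous T := by
  have : T = fun t => ∑ i : Fin d,
      (ContinuousLinearMap.proj (R := ℝ) (φ := fun _ : Fin d => ℝ) i).smulRight
        (T t (fun j => if i = j then (1:ℝ) else 0)) := by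
    funext t; ext y j
    simp only [ContinuousLinearMap.coe_sum', Finset.sum_apply,
      ContinuousLinearMap.smulRight_apply, ContinuousLinearMap.proj_apply]
    conv_lhs => rw [pi_eq_sum_univ y]
    rw [map_sum]
    simp [_root_.map_smul]
  rw [this]
  exact continuous_finset_sum _ fun i _ =>
    ((ContinuousLinearMap.smulRightL ℝ (Ed d) (Ed d)
      (ContinuousLinearMap.proj i)).continuous).comp (hpt _)

set_option maxHeartbeats 2000000 in
lemma key_bound {d : ℕ}
    (T : ℝ → ℝ → Ed d →L[ℝ] Ed d)
    (hT_comp : ∀ t s r, (T t s).comp (T s r) = T t r)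
    (hTn_cont : ∀ s, Continuous fun t => T t s)
    {M lamBar eps η : ℝ} (hM : 0 < M) (hlamBar : 0 < lamBar) (heps : 0 ≤ eps)
    (hη : 0 < η) (hη1 : η ≤ 1)
    (hgrowth : ∀ t s, ‖T t s‖ ≤ M * Real.exp (lamBar * |t - s| + eps * |s|))
    (Df : ℝ → Ed d → (Ed d →L[ℝ] Ed d))
    (hF3 : ∀ t x, ‖Df t x‖ ≤ η * Real.exp (-3 * eps * |t|))
    (φ : ℝ → ℝ → Ed d → Ed d) (Dφ : ℝ → ℝ → Ed d → (Ed d →L[ℝ] Ed d))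
    (hDvop : ∀ t t₀ x, Dφ t t₀ x =
      T t t₀ + ∫ s in t₀..t, (T t s).comp ((Df s (φ s t₀ x)).comp (Dφ s t₀ x)))
    (n : ℝ) (x : Ed d) :
    ‖Dφ (n + 1) n x - T (n + 1) n‖ ≤
      M * (M * Real.exp lamBar * Real.exp (M * Real.exp (lamBar + 2 * eps))) * η *
        Real.exp (lamBar + 3 * eps + 1) * Real.exp (-eps * |n|) := by
  set G : ℝ → Ed d →L[ℝ] Ed d := fun s => (Df s (φ s n x)).comp (Dφ s n x) with hG
  set H : ℝ → Ed d →L[ℝ] Ed d := fun s => (T n s).comp (G s) with hHdef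
  have hTtG : ∀ t s, (T t s).comp (G s) = (T t n).comp (H s) := by
    intro t s
    show (T t s).comp (G s) = (T t n).comp ((T n s).comp (G s))
    rw [← ContinuousLinearMap.comp_assoc (T t n) (T n s) (G s), hT_comp]
  have hRpos : 0 < M * (M * Real.exp lamBar * Real.exp (M * Real.exp (lamBar + 2 * eps))) * η *
      Real.exp (lamBar + 3 * eps + 1) * Real.exp (-eps * |n|) := by positivity
  by_cases hH : IntervalIntegrable H volume n (n + 1)
  · -- main case
    have hn1 : n ≤ n + 1 := by linarith
    set K := M * Real.exp (lamBar + 2 * eps) with hKdef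
    have hK : 0 < K := by positivity
    set a := M * Real.exp (lamBar + eps * |n|) with hadef
    have ha : 0 < a := by positivity
    set HI : ℝ → Ed d →L[ℝ] Ed d := (Icc n (n + 1)).indicator H with hHIdef
    have hHI : Integrable HI volume :=
      ((integrableOn_Icc_iff_integrableOn_Ioc).2 hH.1).integrable_indicator measurableSet_Icc
    set F : ℝ → Ed d →L[ℝ] Ed d := fun t => ∫ s in n..t, HI s with hFdef
    have hFcont : Continuous F :=
      intervalIntegral.continuous_primitive (fun _ _ => hHI.intervalIntegrable) n
    have hFeq : ∀ t ∈ Icc n (n + 1), F t = ∫ s in n..t, H s := by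
      intro t ht
      apply intervalIntegral.integral_congr
      intro s hs
      rw [uIcc_of_le ht.1] at hs
      rw [hHIdef]
      exact Set.indicator_of_mem (show s ∈ Icc n (n + 1) from ⟨hs.1, hs.2.trans ht.2⟩) H
    set u : ℝ → ℝ := fun t => ‖T t n + (T t n).comp (F t)‖ with hudef
    have hucont : Continuous u := ((hTn_cont n).add ((hTn_cont n).clm_comp hFcont)).norm
    have hunonneg : ∀ t, 0 ≤ u t := fun t => norm_nonneg _
    have hHsub : ∀ t ∈ Icc n (n + 1), IntervalIntegrable H volume n t := by
      intro t ht
      apply hH.mono_set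
      rw [uIcc_of_le ht.1, uIcc_of_le hn1]
      exact Icc_subset_Icc le_rfl ht.2
    have hint_eq : ∀ t ∈ Icc n (n + 1),
        (∫ s in n..t, (T t s).comp (G s)) = (T t n).comp (∫ s in n..t, H s) := by
      intro t ht
      have h1 : (∫ s in n..t, (T t s).comp (G s)) =
          ∫ s in n..t, (ContinuousLinearMap.compL ℝ (Ed d) (Ed d) (Ed d) (T t n)) (H s) := by
        apply intervalIntegral.integral_congr
        intro s _
        simp only [ContinuousLinearMap.compL_apply]
        exact hTtG t s
      rw [h1, ContinuousLinearMap.intervalIntegral_comp_comm _ (hHsub t ht),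
        ContinuousLinearMap.compL_apply]
    have hu_eq : ∀ t ∈ Icc n (n + 1), ‖Dφ t n x‖ = u t := by
      intro t ht
      have h2 : (∫ s in n..t, (T t s).comp (G s)) = (T t n).comp (F t) := by
        rw [hFeq t ht]; exact hint_eq t ht
      rw [hDvop t n x, hudef]
      simp only
      rw [h2]
    have habs : ∀ s ∈ Icc n (n + 1), |n| ≤ |s| + 1 := by
      intro s hs
      have h1 : |n - s| ≤ 1 := abs_le.2 ⟨by linarith [hs.2], by linarith [hs.1]⟩
      calc |n| = |s + (n - s)| := by ring_nf
        _ ≤ |s| + |n - s| := abs_add_le _ _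
        _ ≤ |s| + 1 := by linarith
    have hDφ_kernel : ∀ t s, ‖(T t s).comp (G s)‖ ≤
        (M * Real.exp (lamBar * |t - s| + eps * |s|)) *
          ((η * Real.exp (-3 * eps * |s|)) * ‖Dφ s n x‖) := by
      intro t s
      calc ‖(T t s).comp (G s)‖ ≤ ‖T t s‖ * ‖G s‖ := ContinuousLinearMap.opNorm_comp_le _ _
        _ ≤ ‖T t s‖ * (‖Df s (φ s n x)‖ * ‖Dφ s n x‖) := by
            apply mul_le_mul_of_nonneg_left _ (norm_nonneg _)
            rw [hG]
            exact ContinuousLinearMap.opNorm_comp_le _ _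
        _ ≤ _ := by
            gcongr
            · exact hgrowth t s
            · exact hF3 s _
    have hker : ∀ t ∈ Icc n (n + 1), ∀ s ∈ Icc n (n + 1),
        ‖(T t s).comp (G s)‖ ≤ K * u s := by
      intro t ht s hs
      have hts : |t - s| ≤ 1 := abs_le.2 ⟨by linarith [ht.1, hs.2], by linarith [ht.2, hs.1]⟩
      refine (hDφ_kernel t s).trans ?_
      rw [← hu_eq s hs]
      have hexp : Real.exp (lamBar * |t - s| + eps * |s|) * (η * Real.exp (-3 * eps * |s|)) ≤
          Real.exp (lamBar + 2 * eps) := by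
        calc Real.exp (lamBar * |t - s| + eps * |s|) * (η * Real.exp (-3 * eps * |s|))
            ≤ Real.exp (lamBar * |t - s| + eps * |s|) * (1 * Real.exp (-3 * eps * |s|)) := by
              gcongr
          _ = Real.exp ((lamBar * |t - s| + eps * |s|) + (-3 * eps * |s|)) := by
              rw [one_mul, ← Real.exp_add]
          _ ≤ _ := by
              apply Real.exp_le_exp.2
              nlinarith [abs_nonneg s, mul_le_mul_of_nonneg_left hts hlamBar.le,
                mul_nonneg heps (abs_nonneg s)]
      calc M * Real.exp (lamBar * |t - s| + eps * |s|) *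
            ((η * Real.exp (-3 * eps * |s|)) * ‖Dφ s n x‖)
          = (Real.exp (lamBar * |t - s| + eps * |s|) * (η * Real.exp (-3 * eps * |s|))) *
              (M * ‖Dφ s n x‖) := by ring
        _ ≤ Real.exp (lamBar + 2 * eps) * (M * ‖Dφ s n x‖) := by
            apply mul_le_mul_of_nonneg_right hexp (by positivity)
        _ = K * ‖Dφ s n x‖ := by rw [hKdef]; ring
    set Φ : ℝ → ℝ := fun t => ∫ s in n..t, u s with hΦdef
    have hΦd : ∀ t, HasDerivAt Φ (u t) t := fun t =>
      (hucont.integral_hasStrictDerivAt n t).hasDerivAt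
    have hΦcont : Continuous Φ :=
      continuous_iff_continuousAt.2 fun t => (hΦd t).continuousAt
    have hΦnonneg : ∀ t ∈ Icc n (n + 1), 0 ≤ Φ t := fun t ht =>
      intervalIntegral.integral_nonneg ht.1 fun s _ => hunonneg s
    have hu_ineq : ∀ t ∈ Icc n (n + 1), u t ≤ a + K * Φ t := by
      intro t ht
      rw [← hu_eq t ht, hDvop t n x]
      have htn : |t - n| ≤ 1 := abs_le.2 ⟨by linarith [ht.1], by linarith [ht.2]⟩
      have hT1 : ‖T t n‖ ≤ a := by
        refine (hgrowth t n).trans ?_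
        rw [hadef]
        refine mul_le_mul_of_nonneg_left (Real.exp_le_exp.2 ?_) hM.le
        nlinarith [mul_le_mul_of_nonneg_left htn hlamBar.le]
      have hI1 : ‖∫ s in n..t, (T t s).comp (G s)‖ ≤ K * Φ t := by
        have heqn : (fun s => ‖(T t s).comp (G s)‖) =
            fun s => ‖(ContinuousLinearMap.compL ℝ (Ed d) (Ed d) (Ed d) (T t n)) (H s)‖ := by
          funext s
          rw [ContinuousLinearMap.compL_apply, hTtG]
        calc ‖∫ s in n..t, (T t s).comp (G s)‖
            ≤ ∫ s in n..t, ‖(T t s).comp (G s)‖ :=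
              intervalIntegral.norm_integral_le_integral_norm ht.1
          _ ≤ ∫ s in n..t, K * u s := by
              apply intervalIntegral.integral_mono_on ht.1 _ _
              · intro s hs
                exact hker t ht s ⟨hs.1, hs.2.trans ht.2⟩
              · rw [heqn]
                exact ((hHsub t ht).clm_apply' _).norm
              · exact (continuous_const.mul hucont).intervalIntegrable n t
          _ = K * Φ t := by
              rw [hΦdef]
              exact intervalIntegral.integral_const_mul K u
      calc ‖T t n + ∫ s in n..t, (T t s).comp (G s)‖
          ≤ ‖T t n‖ + ‖∫ s in n..t, (T t s).comp (G s)‖ := norm_add_le _ _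
        _ ≤ a + K * Φ t := add_le_add hT1 hI1
    have hgron := norm_le_gronwallBound_of_norm_deriv_right_le (a := n) (b := n + 1)
      (δ := 0) (K := K) (ε := a) (f := Φ) (f' := u) hΦcont.continuousOn
      (fun t _ => (hΦd t).hasDerivWithinAt)
      (by rw [hΦdef]; simp [intervalIntegral.integral_same])
      (by
        intro t ht
        rw [Real.norm_of_nonneg (hunonneg t),
          Real.norm_of_nonneg (hΦnonneg t (Ico_subset_Icc_self ht))]
        have := hu_ineq t (Ico_subset_Icc_self ht)
        linarith)
    have hDφ_bd : ∀ s ∈ Icc n (n + 1), ‖Dφ s n x‖ ≤ a * Real.exp K := by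
      intro s hs
      have h1 := hgron s hs
      rw [Real.norm_of_nonneg (hΦnonneg s hs), gronwallBound_of_K_ne_0 hK.ne'] at h1
      have hsn : s - n ≤ 1 := by linarith [hs.2]
      rw [hu_eq s hs]
      have h3 : K * (a / K * (Real.exp (K * (s - n)) - 1)) =
          a * (Real.exp (K * (s - n)) - 1) := by field_simp
      have hexp : Real.exp (K * (s - n)) ≤ Real.exp K :=
        Real.exp_le_exp.2 (by nlinarith)
      calc u s ≤ a + K * Φ s := hu_ineq s hs
        _ ≤ a + K * (0 * Real.exp (K * (s - n)) + a / K * (Real.exp (K * (s - n)) - 1)) := by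
            nlinarith
        _ = a * Real.exp (K * (s - n)) := by
            rw [zero_mul, zero_add, h3]; ring
        _ ≤ a * Real.exp K := by gcongr
    -- finish
    rw [hDvop (n + 1) n x]
    simp only [add_sub_cancel_left]
    have hfinal : ∀ s ∈ Set.uIoc n (n + 1), ‖(T (n + 1) s).comp (G s)‖ ≤
        M * (M * Real.exp lamBar * Real.exp (M * Real.exp (lamBar + 2 * eps))) * η *
          Real.exp (lamBar + 3 * eps + 1) * Real.exp (-eps * |n|) := by
      intro s hs
      rw [uIoc_of_le hn1] at hs
      have hs' : s ∈ Icc n (n + 1) := Ioc_subset_Icc_self hs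
      have h01 : |n + 1 - s| ≤ 1 := abs_le.2 ⟨by linarith [hs'.2], by linarith [hs'.1]⟩
      have h02 := habs s hs'
      refine (hDφ_kernel (n + 1) s).trans ?_
      have hD := hDφ_bd s hs'
      have hfac : Real.exp (lamBar * |n + 1 - s|) * Real.exp (eps * |s|) *
          Real.exp (-3 * eps * |s|) * Real.exp (eps * |n|) ≤
          Real.exp (lamBar + 3 * eps + 1) * Real.exp (-eps * |n|) := by
        rw [← Real.exp_add, ← Real.exp_add, ← Real.exp_add, ← Real.exp_add]
        apply Real.exp_le_exp.2
        nlinarith [mul_le_mul_of_nonneg_left h01 hlamBar.le,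
          mul_le_mul_of_nonneg_left h02 (by positivity : (0:ℝ) ≤ 2 * eps),
          mul_nonneg heps (abs_nonneg s)]
      calc M * Real.exp (lamBar * |n + 1 - s| + eps * |s|) *
            ((η * Real.exp (-3 * eps * |s|)) * ‖Dφ s n x‖)
          ≤ M * Real.exp (lamBar * |n + 1 - s| + eps * |s|) *
              ((η * Real.exp (-3 * eps * |s|)) * (a * Real.exp K)) := by gcongr
        _ = (M * M * η * Real.exp K * Real.exp lamBar) *
              (Real.exp (lamBar * |n + 1 - s|) * Real.exp (eps * |s|) *
                Real.exp (-3 * eps * |s|) * Real.exp (eps * |n|)) := by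
            rw [hadef]
            simp only [Real.exp_add]
            ring
        _ ≤ (M * M * η * Real.exp K * Real.exp lamBar) *
              (Real.exp (lamBar + 3 * eps + 1) * Real.exp (-eps * |n|)) :=
            mul_le_mul_of_nonneg_left hfac (by positivity)
        _ = _ := by rw [hKdef]; ring
    refine le_trans (intervalIntegral.norm_integral_le_of_norm_le_const hfinal) ?_
    rw [show n + 1 - n = (1:ℝ) by ring, abs_one, mul_one]
  · -- the degenerate case: the integrand is not integrable and the integral is zero
    have hnot : ¬ IntervalIntegrable (fun s => (T (n + 1) s).comp (G s)) volume n (n + 1) := by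
      intro hcon
      apply hH
      have h2 := hcon.clm_apply' (ContinuousLinearMap.compL ℝ (Ed d) (Ed d) (Ed d) (T n (n + 1)))
      have heq : H = fun s =>
          (ContinuousLinearMap.compL ℝ (Ed d) (Ed d) (Ed d) (T n (n + 1)))
            ((T (n + 1) s).comp (G s)) := by
        funext s
        rw [ContinuousLinearMap.compL_apply]
        show (T n s).comp (G s) = (T n (n + 1)).comp ((T (n + 1) s).comp (G s))
        rw [← ContinuousLinearMap.comp_assoc (T n (n + 1)) (T (n + 1) s) (G s), hT_comp]
      rw [heq]
      exact h2
    rw [hDvop (n + 1) n x]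
    simp only [add_sub_cancel_left]
    rw [intervalIntegral.integral_undef hnot, norm_zero]
    exact hRpos.le


theorem derivative_of_discretized_perturbation_bound (d : ℕ)
    -- the linear equation x' = A(t)x and its evolution family T(t,s)
    (A : ℝ → Ed d →L[ℝ] Ed d) (T : ℝ → ℝ → Ed d →L[ℝ] Ed d)
    (hT_id : ∀ t, T t t = ContinuousLinearMap.id ℝ (Ed d))
    (hT_comp : ∀ t s r, (T t s).comp (T s r) = T t r)
    (hT_deriv : ∀ s x t, HasDerivAt (fun τ => T τ s x) (A t (T t s x)) t)
    (M lamBar eps η : ℝ) (hM : 0 < M) (hlamBar : 0 < lamBar) (heps : 0 ≤ eps)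
    (hη : 0 < η) (hη1 : η ≤ 1)
    (hgrowth : ∀ t s, ‖T t s‖ ≤ M * Real.exp (lamBar * |t - s| + eps * |s|))
    -- the perturbation f, continuous, C¹ in x with jointly continuous derivative
    (f : ℝ → Ed d → Ed d) (Df : ℝ → Ed d → (Ed d →L[ℝ] Ed d))
    (hf_cont : Continuous (fun p : ℝ × Ed d => f p.1 p.2))
    (hf_diff : ∀ t x, HasFDerivAt (f t) (Df t x) x)
    (hDf_cont : Continuous (fun p : ℝ × Ed d => Df p.1 p.2))
    -- (F3)
    (hF3 : ∀ t x, ‖Df t x‖ ≤ η * Real.exp (-3 * eps * |t|))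
    -- φ(t,t₀;x): the globally defined solution of x' = A(t)x + f(t,x), C¹ in x,
    -- satisfying the variation-of-parameters formula
    (φ : ℝ → ℝ → Ed d → Ed d) (Dφ : ℝ → ℝ → Ed d → (Ed d →L[ℝ] Ed d))
    (hφ_init : ∀ t₀ x, φ t₀ t₀ x = x)
    (hφ_sol : ∀ t₀ x t, HasDerivAt (fun τ => φ τ t₀ x) (A t (φ t t₀ x) + f t (φ t t₀ x)) t)
    (hφ_diff : ∀ t t₀ x, HasFDerivAt (φ t t₀) (Dφ t t₀ x) x)
    (hDvop : ∀ t t₀ x, Dφ t t₀ x =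
      T t t₀ + ∫ s in t₀..t, (T t s).comp ((Df s (φ s t₀ x)).comp (Dφ s t₀ x))) :
    -- then, with M̃ = M e^{λ̄} e^{M e^{λ̄+2ε}}, the derivative of
    -- f_n = φ(n+1,n;·) − T(n+1,n) satisfies ‖Df_n(x)‖ ≤ M M̃ η e^{λ̄+3ε+1} e^{−ε|n|}
    (∀ (n : ℤ) (x : Ed d),
      ‖Dφ ((n : ℝ) + 1) (n : ℝ) x - T ((n : ℝ) + 1) (n : ℝ)‖ ≤
        M * (M * Real.exp lamBar * Real.exp (M * Real.exp (lamBar + 2 * eps))) * η *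
          Real.exp (lamBar + 3 * eps + 1) * Real.exp (-eps * |(n : ℝ)|)) ∧
    -- in particular there is η̃ > 0 proportional to η with ‖Df_n(x)‖ ≤ η̃ e^{−ε|n|}
    (∃ c : ℝ, 0 < c ∧ ∀ (n : ℤ) (x : Ed d),
      ‖Dφ ((n : ℝ) + 1) (n : ℝ) x - T ((n : ℝ) + 1) (n : ℝ)‖ ≤
        (c * η) * Real.exp (-eps * |(n : ℝ)|)) := by
  have hTn_cont : ∀ s : ℝ, Continuous fun t => T t s := fun s =>
    cont_of_pointwise fun y =>
      continuous_iff_continuousAt.2 fun t => (hT_deriv s y t).continuousAt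
  have key := fun (n : ℝ) (x : Ed d) =>
    key_bound T hT_comp hTn_cont hM hlamBar heps hη hη1 hgrowth Df hF3 φ Dφ hDvop n x
  refine ⟨fun n x => key (n : ℝ) x, ?_⟩
  refine ⟨M * (M * Real.exp lamBar * Real.exp (M * Real.exp (lamBar + 2 * eps))) *
    Real.exp (lamBar + 3 * eps + 1), by positivity, ?_⟩
  intro n x
  calc ‖Dφ ((n : ℝ) + 1) (n : ℝ) x - T ((n : ℝ) + 1) (n : ℝ)‖
      ≤ M * (M * Real.exp lamBar * Real.exp (M * Real.exp (lamBar + 2 * eps))) * η *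
          Real.exp (lamBar + 3 * eps + 1) * Real.exp (-eps * |(n : ℝ)|) := key (n : ℝ) x
    _ = (M * (M * Real.exp lamBar * Real.exp (M * Real.exp (lamBar + 2 * eps))) *
          Real.exp (lamBar + 3 * eps + 1) * η) * Real.exp (-eps * |(n : ℝ)|) := by ring



end
end
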